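/- arXiv:2112.08042 — 7 statements merged into one kernel-verified Lean document; each statement's English description precedes it below -/
import Mathlib

section
/- For every natural number n, the identity ∑_{j=0}^{n} C(n,2j)·C(2j,j)·2^{−2j} = 2^{−n}·C(2n,n) holds. -/
open Polynomial Finset

lemma coeff_two_X_add_one (m d : ℕ) :
    ((2 * X + 1 : ℕ[X]) ^ m).coeff d = m.choose d * 2 ^ d := by
  rw [add_pow, finset_sum_coeff]
  have : ∀ i ∈ range (m + 1),
      ((2 * X : ℕ[X]) ^ i * 1 ^ (m - i) * (m.choose i : ℕ[X])).coeff d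
        = if i = d then m.choose d * 2 ^ d else 0 := by
    intro i _
    have heq : ((2 * X : ℕ[X]) ^ i * 1 ^ (m - i) * (m.choose i : ℕ[X]))
        = ((2 ^ i * m.choose i : ℕ) : ℕ[X]) * X ^ i := by
      push_cast
      ring
    rw [heq, coeff_natCast_mul, coeff_X_pow]
    by_cases h : i = d
    · subst h
      simp [Nat.cast_id]
      ring
    · simp [h, Ne.symm h]
  rw [Finset.sum_congr rfl this, Finset.sum_ite_eq' (range (m + 1)) d]
  split_ifs with h
  · rfl
  · simp at h
    rw [Nat.choose_eq_zero_of_lt h, zero_mul]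

lemma key (n : ℕ) :
    ∑ j ∈ Finset.range (n + 1), n.choose j * ((n - j).choose j) * 2 ^ (n - 2 * j)
      = (2 * n).choose n := by
  have hsq : ((X + 1 : ℕ[X])) ^ 2 = X ^ 2 + (2 * X + 1) := by ring
  have h : ((X + 1 : ℕ[X])) ^ (2 * n) = (X ^ 2 + (2 * X + 1)) ^ n := by
    rw [pow_mul, hsq]
  have h2 := congrArg (fun p => Polynomial.coeff p n) h
  simp only [coeff_X_add_one_pow] at h2
  rw [add_pow, finset_sum_coeff] at h2
  have h3 : ∀ k ∈ range (n + 1),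
      (((X : ℕ[X]) ^ 2) ^ k * (2 * X + 1) ^ (n - k) * ((n.choose k : ℕ) : ℕ[X])).coeff n
        = n.choose k * ((n - k).choose k) * 2 ^ (n - 2 * k) := by
    intro k hk
    rw [← pow_mul, coeff_mul_natCast, coeff_X_pow_mul']
    split_ifs with h2k
    · rw [coeff_two_X_add_one]
      have : (n - k).choose (n - 2 * k) = (n - k).choose k := by
        rw [← Nat.choose_symm (by omega : n - 2 * k ≤ n - k)]
        congr 1; omega
      rw [this]
      simp [Nat.cast_id]
      ring_nf
    · have hk' : k ≤ n := by have := Finset.mem_range.mp hk; omega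
      have : (n - k).choose k = 0 := Nat.choose_eq_zero_of_lt (by omega)
      simp [this]
  rw [Finset.sum_congr rfl h3] at h2
  exact h2.symm

theorem stmt_1 (n : ℕ) :
    ∑ j ∈ Finset.range (n + 1),
      (n.choose (2 * j) : ℝ) * ((2 * j).choose j : ℝ) / 2 ^ (2 * j)
      = ((2 * n).choose n : ℝ) / 2 ^ n := by
  have hpow : (2 : ℝ) ^ n ≠ 0 := by positivity
  rw [eq_div_iff hpow, Finset.sum_mul]
  have h3 : ∀ j ∈ range (n + 1),
      (n.choose (2 * j) : ℝ) * ((2 * j).choose j : ℝ) / 2 ^ (2 * j) * 2 ^ n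
        = ((n.choose j * ((n - j).choose j) * 2 ^ (n - 2 * j) : ℕ) : ℝ) := by
    intro j hj
    by_cases h2j : 2 * j ≤ n
    · have : (n.choose (2 * j)) * ((2 * j).choose j) = n.choose j * (n - j).choose j := by
        have := Nat.choose_mul (n := n) (by omega : j ≤ 2 * j)
        simpa [Nat.two_mul j, Nat.add_sub_cancel] using this
      push_cast [← this]
      rw [div_mul_eq_mul_div, div_eq_iff (by positivity : ((2:ℝ)^(2*j)) ≠ 0), mul_assoc, mul_assoc, ← pow_add]
      have hh : n - 2 * j + 2 * j = n := by omega
      rw [hh]; ring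
    · have h1 : n.choose (2 * j) = 0 := Nat.choose_eq_zero_of_lt (by omega)
      have hj' : j ≤ n := by have := Finset.mem_range.mp hj; omega
      have h2 : (n - j).choose j = 0 := Nat.choose_eq_zero_of_lt (by omega)
      simp [h1, h2]
  rw [Finset.sum_congr rfl h3, ← Nat.cast_sum, key]
end

section
/- Let n ≥ 3 be an odd integer and let α_n ∈ (0,1) be the unique fixed point of f_n in (0,1). Then for every x_0 ∈ (0,1), the sequence of iterates u_0 = x_0, u_{m+1} = f_n(u_m) converges to α_n as m → ∞; in other words, (0,1) is contained in the basin of attraction of α_n. -/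
open Real Filter Finset intervalIntegral

lemma prod_eq_centralBinom (k : ℕ) :
    ∏ i ∈ range k, (2 * (i : ℝ) + 1) / (2 * i + 2) = (Nat.centralBinom k : ℝ) / 4 ^ k := by
  induction k with
  | zero => simp [Nat.centralBinom_zero]
  | succ k ih =>
    rw [prod_range_succ, ih]
    have h := Nat.succ_mul_centralBinom_succ k
    have h' : ((k:ℝ) + 1) * (Nat.centralBinom (k+1) : ℝ) = 2 * (2 * k + 1) * Nat.centralBinom k := by
      exact_mod_cast congrArg (Nat.cast : ℕ → ℝ) h
    have hk1 : ((k:ℝ) + 1) ≠ 0 := by positivity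
    field_simp
    linear_combination (-(2:ℝ)*4^k) * h'

lemma integral_sin_pow_two_pi (j : ℕ) :
    ∫ x in (0:ℝ)..(2*π), sin x ^ j
      = (1 + (-1:ℝ)^j) * ∫ x in (0:ℝ)..π, sin x ^ j := by
  have hint : ∀ a b : ℝ, IntervalIntegrable (fun x => sin x ^ j) MeasureTheory.volume a b :=
    fun a b => (continuous_sin.pow j).intervalIntegrable a b
  have hsplit := intervalIntegral.integral_add_adjacent_intervals (hint 0 π) (hint π (2*π))
  have h2 : ∫ x in π..(2*π), sin x ^ j = (-1:ℝ)^j * ∫ x in (0:ℝ)..π, sin x ^ j := by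
    have := intervalIntegral.integral_comp_add_right (a := (0:ℝ)) (b := π)
      (fun y => sin y ^ j) π
    rw [zero_add] at this
    have h2π : π + π = 2*π := by ring
    rw [h2π] at this
    rw [← this]
    have : ∀ x : ℝ, sin (x + π) ^ j = (-1:ℝ)^j * sin x ^ j := by
      intro x
      rw [Real.sin_add_pi]
      rw [neg_pow]
    simp_rw [this]
    rw [intervalIntegral.integral_const_mul]
  rw [← hsplit, h2]; ring

lemma integral_cos_pow_two_pi (j : ℕ) :
    ∫ x in (0:ℝ)..(2*π), cos x ^ j
      = (1 + (-1:ℝ)^j) * ∫ x in (0:ℝ)..π, sin x ^ j := by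
  rw [← integral_sin_pow_two_pi]
  have hper : Function.Periodic (fun x => sin x ^ j) (2*π) := fun x => by
    simp [Real.sin_periodic x]
  have h1 : ∀ x : ℝ, cos x ^ j = sin (x + π/2) ^ j := by
    intro x; rw [Real.sin_add_pi_div_two]
  simp_rw [h1]
  have := intervalIntegral.integral_comp_add_right (a := (0:ℝ)) (b := 2*π)
    (fun y => sin y ^ j) (π/2)
  rw [this, zero_add]
  have := hper.intervalIntegral_add_eq (π/2) 0
  rw [zero_add] at this
  rw [show 2*π + π/2 = π/2 + 2*π by ring]
  exact this

lemma integral_cos_pow_two_pi' (j : ℕ) :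
    ∫ x in (0:ℝ)..(2*π), cos x ^ j =
      if Even j then 2*π * ((Nat.centralBinom (j/2) : ℝ) / 4 ^ (j/2)) else 0 := by
  rw [integral_cos_pow_two_pi]
  rcases Nat.even_or_odd j with he | ho
  · obtain ⟨k, rfl⟩ := he
    have h2k : k + k = 2 * k := by ring
    rw [if_pos (Even.add_self k), h2k]
    rw [integral_sin_pow_even, prod_eq_centralBinom]
    have : (2*k)/2 = k := by omega
    rw [this]
    have : ((-1:ℝ))^(2*k) = 1 := by
      rw [pow_mul]; norm_num
    rw [this]; ring
  · rw [if_neg (Nat.not_even_iff_odd.mpr ho)]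
    have : ((-1:ℝ))^j = -1 := ho.neg_one_pow
    rw [this]; ring

lemma sum_even_aux (n : ℕ) (g : ℕ → ℝ) :
    ∑ j ∈ range (n+1), (if Even j then g j else 0) = ∑ k ∈ range (n/2+1), g (2*k) := by
  rw [← Finset.sum_filter]
  apply Finset.sum_nbij' (i := fun j => j / 2) (j := fun k => 2 * k)
  · intro a ha
    simp only [Finset.mem_filter, Finset.mem_range] at ha
    simp only [Finset.mem_range]
    omega
  · intro a ha
    simp only [Finset.mem_range] at ha
    simp only [Finset.mem_filter, Finset.mem_range]
    constructor
    · omega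
    · exact even_two_mul a
  · intro a ha
    simp only [Finset.mem_filter, Finset.mem_range] at ha
    obtain ⟨-, k, hk⟩ := ha
    omega
  · intro a ha; omega
  · intro a ha
    simp only [Finset.mem_filter, Finset.mem_range] at ha
    obtain ⟨-, k, hk⟩ := ha
    congr 1; omega

/-- `f n t = ∑_{k, 0 ≤ 2k ≤ n} C(n,2k)·C(2k,k)·((1−t)/2)^{2k}·t^{n−2k}` -/
noncomputable def f (n : ℕ) (t : ℝ) : ℝ :=
  ∑ k ∈ Finset.range (n / 2 + 1),
    (n.choose (2 * k) : ℝ) * ((2 * k).choose k : ℝ) * ((1 - t) / 2) ^ (2 * k) * t ^ (n - 2 * k)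

lemma f_repr (n : ℕ) (t : ℝ) :
    ∫ θ in (0:ℝ)..(2*π), (t + (1-t)*cos θ)^n = (2*π) * f n t := by
  have hexp : ∀ θ : ℝ, (t + (1-t)*cos θ)^n
      = ∑ j ∈ range (n+1), ((n.choose j : ℝ) * (1-t)^j * t^(n-j)) * cos θ ^ j := by
    intro θ
    rw [add_comm, add_pow]
    exact Finset.sum_congr rfl fun j _ => by rw [mul_pow]; ring
  simp_rw [hexp]
  rw [intervalIntegral.integral_finset_sum (fun j _ =>
    (Continuous.intervalIntegrable (by fun_prop) _ _))]
  simp_rw [intervalIntegral.integral_const_mul, integral_cos_pow_two_pi', mul_ite, mul_zero]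
  have := sum_even_aux n (fun j => ((n.choose j : ℝ) * (1-t)^j * t^(n-j)) *
    (2*π * ((Nat.centralBinom (j/2) : ℝ) / 4 ^ (j/2))))
  rw [this]
  unfold f
  rw [Finset.mul_sum]
  refine Finset.sum_congr rfl fun k _ => ?_
  have h1 : (2*k)/2 = k := by omega
  rw [h1, Nat.centralBinom]
  have h2 : ((1 - t)/2) ^ (2*k) = (1-t)^(2*k) / 4^k := by
    rw [div_pow]
    congr 1
    rw [pow_mul]; norm_num
  rw [h2]; ring

lemma f_mono (n : ℕ) (hodd : Odd n) : Monotone (f n) := by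
  intro t1 t2 h
  have hpi : (0:ℝ) < 2*π := by positivity
  have key : ∫ θ in (0:ℝ)..(2*π), (t1 + (1-t1)*cos θ)^n
      ≤ ∫ θ in (0:ℝ)..(2*π), (t2 + (1-t2)*cos θ)^n := by
    apply intervalIntegral.integral_mono_on hpi.le
      (Continuous.intervalIntegrable (by fun_prop) _ _)
      (Continuous.intervalIntegrable (by fun_prop) _ _)
    intro x _
    apply (Odd.strictMono_pow (R := ℝ) hodd).monotone
    nlinarith [Real.cos_le_one x]
  rw [f_repr, f_repr] at key
  exact le_of_mul_le_mul_left key hpi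

lemma f_cont (n : ℕ) : Continuous (f n) := by
  unfold f
  exact continuous_finset_sum _ (fun k _ => by fun_prop)

lemma f_one (n : ℕ) : f n 1 = 1 := by
  unfold f
  rw [Finset.sum_eq_single 0]
  · simp
  · intro k _ hk
    rw [show ((1:ℝ)-1)/2 = 0 by norm_num, zero_pow (by omega : 2*k ≠ 0)]
    ring
  · intro h; simp at h

lemma f_term_le (n : ℕ) (hn : 3 ≤ n) (hodd : Odd n) (x : ℝ) (hx0 : 0 ≤ x) (hx1 : x ≤ 1) :
    (n : ℝ) * (Nat.centralBinom (n/2) : ℝ) * ((1-x)/2)^(n-1) * x ≤ f n x := by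
  obtain ⟨m, hm⟩ := hodd
  unfold f
  have hmem : n/2 ∈ range (n/2 + 1) := by simp
  have hterm := Finset.single_le_sum (f := fun k =>
    (n.choose (2 * k) : ℝ) * ((2 * k).choose k : ℝ) * ((1 - x) / 2) ^ (2 * k) * x ^ (n - 2 * k))
    (fun k _ => mul_nonneg (mul_nonneg (mul_nonneg (by positivity) (by positivity))
      (pow_nonneg (by linarith) _)) (pow_nonneg hx0 _)) hmem
  have h2 : 2 * (n/2) = n - 1 := by omega
  have h3 : n - (n - 1) = 1 := by omega
  rw [h2, h3, pow_one] at hterm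
  have h4 : (n.choose (n-1) : ℝ) = n := by
    rw [Nat.choose_symm (by omega), Nat.choose_one_right]
  have h5 : ((n-1).choose (n/2) : ℝ) = (Nat.centralBinom (n/2) : ℝ) := by
    rw [Nat.centralBinom, h2]
  rw [h4, h5] at hterm
  exact hterm

lemma f_upper (n : ℕ) (hn : 3 ≤ n) (x : ℝ) (hx0 : 0 ≤ x) (hx1 : x ≤ 1) :
    f n x ≤ x^n + (∑ k ∈ range (n/2+1), (n.choose (2*k) : ℝ) * ((2*k).choose k))
      * ((1-x)/2)^2 := by
  have hs0 : (0:ℝ) ≤ (1-x)/2 := by linarith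
  have hs1 : (1-x)/2 ≤ 1 := by linarith
  unfold f
  rw [Finset.sum_range_succ']
  have hg0 : (n.choose (2*0) : ℝ) * ((2*0).choose 0 : ℝ) * ((1-x)/2)^(2*0) * x^(n-2*0)
      = x^n := by norm_num
  rw [hg0]
  have hbound : ∑ i ∈ range (n/2),
      (n.choose (2*(i+1)) : ℝ) * ((2*(i+1)).choose (i+1) : ℝ) * ((1-x)/2)^(2*(i+1)) * x^(n-2*(i+1))
      ≤ (∑ k ∈ range (n/2+1), (n.choose (2*k) : ℝ) * ((2*k).choose k)) * ((1-x)/2)^2 := by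
    calc ∑ i ∈ range (n/2),
        (n.choose (2*(i+1)) : ℝ) * ((2*(i+1)).choose (i+1) : ℝ) * ((1-x)/2)^(2*(i+1)) * x^(n-2*(i+1))
        ≤ ∑ i ∈ range (n/2),
          (n.choose (2*(i+1)) : ℝ) * ((2*(i+1)).choose (i+1) : ℝ) * ((1-x)/2)^2 := by
          apply Finset.sum_le_sum
          intro i _
          have h1 : ((1-x)/2)^(2*(i+1)) ≤ ((1-x)/2)^2 :=
            pow_le_pow_of_le_one hs0 hs1 (by omega)
          have h2 : x^(n-2*(i+1)) ≤ 1 := pow_le_one₀ hx0 hx1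
          have hc : (0:ℝ) ≤ (n.choose (2*(i+1)) : ℝ) * ((2*(i+1)).choose (i+1) : ℝ) := by positivity
          calc (n.choose (2*(i+1)) : ℝ) * ((2*(i+1)).choose (i+1) : ℝ) * ((1-x)/2)^(2*(i+1)) * x^(n-2*(i+1))
              ≤ (n.choose (2*(i+1)) : ℝ) * ((2*(i+1)).choose (i+1) : ℝ) * ((1-x)/2)^(2*(i+1)) * 1 :=
                mul_le_mul_of_nonneg_left h2 (by positivity)
            _ = (n.choose (2*(i+1)) : ℝ) * ((2*(i+1)).choose (i+1) : ℝ) * ((1-x)/2)^(2*(i+1)) := by ring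
            _ ≤ (n.choose (2*(i+1)) : ℝ) * ((2*(i+1)).choose (i+1) : ℝ) * ((1-x)/2)^2 :=
                mul_le_mul_of_nonneg_left h1 hc
      _ = (∑ i ∈ range (n/2), (n.choose (2*(i+1)) : ℝ) * ((2*(i+1)).choose (i+1) : ℝ)) * ((1-x)/2)^2 := by
          rw [Finset.sum_mul]
      _ ≤ (∑ k ∈ range (n/2+1), (n.choose (2*k) : ℝ) * ((2*k).choose k)) * ((1-x)/2)^2 := by
          apply mul_le_mul_of_nonneg_right _ (by positivity)
          rw [Finset.sum_range_succ' (fun k => (n.choose (2*k) : ℝ) * ((2*k).choose k)) (n/2)]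
          simp
  linarith

lemma left_witness (n : ℕ) (hn : 3 ≤ n) (hodd : Odd n) (α : ℝ) (hα : α ∈ Set.Ioo (0:ℝ) 1) :
    ∃ x₁ ∈ Set.Ioo (0:ℝ) α, x₁ < f n x₁ := by
  obtain ⟨m, hm⟩ := hodd
  have hm1 : 1 ≤ m := by omega
  have hnd : n/2 = m := by omega
  have hCB2 : 2 ≤ Nat.centralBinom m := Nat.two_le_centralBinom m (by omega)
  have h4m : 4^m ≤ 2*m*Nat.centralBinom m :=
    Nat.four_pow_le_two_mul_self_mul_centralBinom m (by omega)
  set C : ℝ := (Nat.centralBinom m : ℝ) with hC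
  have hC2 : (2:ℝ) ≤ C := by rw [hC]; exact_mod_cast hCB2
  have h4mR : (4:ℝ)^m ≤ 2*m*C := by rw [hC]; exact_mod_cast h4m
  have hnR : (n:ℝ) = 2*m+1 := by exact_mod_cast hm
  have hnC : (4:ℝ)^m + 2 ≤ (n:ℝ)*C := by nlinarith
  set D : ℝ := (n:ℝ)*C*(2*m) + 1 with hD
  have hDpos : (0:ℝ) < D := by positivity
  set x₁ := min (α/2) (1/D) with hx₁def
  have hα0 := hα.1
  have hx₁pos : 0 < x₁ := lt_min (by linarith) (by positivity)
  have hx₁α : x₁ < α := (min_le_left _ _).trans_lt (by linarith)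
  have hx₁1 : x₁ ≤ 1 := by linarith [hα.2]
  refine ⟨x₁, ⟨hx₁pos, hx₁α⟩, ?_⟩
  have hb : 1 - (2*m:ℝ)*x₁ ≤ (1-x₁)^(2*m) := by
    have := one_add_mul_le_pow (a := -x₁) (by linarith) (2*m)
    push_cast at this
    calc 1 - (2*m:ℝ)*x₁ = 1 + (2*m:ℝ)*(-x₁) := by ring
      _ ≤ (1 + -x₁)^(2*m) := this
      _ = (1-x₁)^(2*m) := by ring_nf
  have hterm := f_term_le n hn ⟨m, hm⟩ x₁ hx₁pos.le hx₁1
  rw [hnd] at hterm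
  have hn1 : n - 1 = 2*m := by omega
  rw [hn1] at hterm
  have hpow : ((1-x₁)/2)^(2*m) = (1-x₁)^(2*m)/4^m := by
    rw [div_pow]
    congr 1
    rw [pow_mul]; norm_num
  rw [hpow] at hterm
  have e2 : (n:ℝ)*C*(2*m)*x₁ ≤ 1 - x₁ := by
    have hx₁D : x₁ ≤ 1/D := min_le_right _ _
    rw [le_div_iff₀ hDpos] at hx₁D
    have hexp : x₁ * D = (n:ℝ)*C*(2*m)*x₁ + x₁ := by rw [hD]; ring
    linarith
  have e3 : (n:ℝ)*C*(2*m)*x₁*x₁ ≤ x₁ := by nlinarith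
  have e1 : (1 - (2*m:ℝ)*x₁) * x₁ ≤ (1-x₁)^(2*m) * x₁ :=
    mul_le_mul_of_nonneg_right hb hx₁pos.le
  have e4 : (n:ℝ)*C*((1 - (2*m:ℝ)*x₁) * x₁) ≤ (n:ℝ)*C*((1-x₁)^(2*m) * x₁) :=
    mul_le_mul_of_nonneg_left e1 (by positivity)
  have h4 : (0:ℝ) < 4^m := by positivity
  have key : x₁ < (n:ℝ) * C * ((1-x₁)^(2*m)/(4:ℝ)^m) * x₁ := by
    rw [show (n:ℝ)*C*((1-x₁)^(2*m)/4^m)*x₁ = ((n:ℝ)*C*((1-x₁)^(2*m)*x₁))/4^m by ring,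
      lt_div_iff₀ h4]
    nlinarith
  linarith

lemma right_witness (n : ℕ) (hn : 3 ≤ n) (α : ℝ) (hα : α ∈ Set.Ioo (0:ℝ) 1) :
    ∃ x₂ ∈ Set.Ioo α (1:ℝ), f n x₂ < x₂ := by
  set M : ℝ := ∑ k ∈ range (n/2+1), (n.choose (2*k) : ℝ) * ((2*k).choose k) with hM
  have hM0 : 0 ≤ M := by positivity
  have hM1 : (0:ℝ) < M + 1 := by linarith
  set x₂ := max ((1+α)/2) (1 - 1/(M+1)) with hx₂def
  have hα0 := hα.1; have hα1 := hα.2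
  have hx₂α : α < x₂ := lt_of_lt_of_le (by linarith) (le_max_left _ _)
  have hx₂1 : x₂ < 1 := max_lt (by linarith) (by
    have h01 : 0 < 1/(M+1) := by positivity
    linarith)
  have hhalf : 1/2 ≤ x₂ := le_trans (by linarith) (le_max_left _ _)
  have h1x : 1 - x₂ ≤ 1/(M+1) := by
    have := le_max_right ((1+α)/2) (1 - 1/(M+1))
    linarith
  refine ⟨x₂, ⟨hx₂α, hx₂1⟩, ?_⟩
  have hx₂0 : (0:ℝ) ≤ x₂ := by linarith
  have hup := f_upper n hn x₂ hx₂0 hx₂1.le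
  rw [← hM] at hup
  have hpown : x₂^n ≤ x₂*x₂ := by
    have h1 : x₂^(n-1) ≤ x₂^1 := pow_le_pow_of_le_one hx₂0 hx₂1.le (by omega)
    have h2 : x₂^n = x₂^(n-1)*x₂ := by
      rw [← pow_succ]
      congr 1
      omega
    rw [h2, pow_one] at *
    nlinarith
  have hA : (1-x₂)*(M+1) ≤ 1 := by
    calc (1-x₂)*(M+1) ≤ (1/(M+1))*(M+1) := mul_le_mul_of_nonneg_right h1x (by linarith)
      _ = 1 := by field_simp
  have hB : M*(1-x₂) ≤ x₂ := by nlinarith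
  have hMs : M*(1-x₂)*((1-x₂)/4) ≤ x₂*((1-x₂)/4) :=
    mul_le_mul_of_nonneg_right hB (by linarith)
  nlinarith [mul_pos (lt_of_lt_of_le (by norm_num : (0:ℝ) < 1/2) hhalf) (by linarith : (0:ℝ) < 1 - x₂)]

lemma sign_lemma (n : ℕ) (α : ℝ) (hα : α ∈ Set.Ioo (0:ℝ) 1)
    (huniq : ∀ t ∈ Set.Ioo (0 : ℝ) 1, f n t = t → t = α)
    {a b : ℝ} (hab : Set.Ioo a b ⊆ Set.Ioo (0:ℝ) 1) (hnα : ∀ x ∈ Set.Ioo a b, x ≠ α)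
    {x₀ : ℝ} (hx₀ : x₀ ∈ Set.Ioo a b) (hx₀f : x₀ < f n x₀) :
    ∀ x ∈ Set.Ioo a b, x < f n x := by
  intro x hx
  rcases lt_trichotomy (f n x) x with hlt | heq | hgt
  · exfalso
    have hcont : ContinuousOn (fun y => f n y - y) (Set.uIcc x x₀) :=
      ((f_cont n).sub continuous_id).continuousOn
    have h0 : (0:ℝ) ∈ Set.uIcc (f n x - x) (f n x₀ - x₀) := by
      rw [Set.mem_uIcc]
      left
      constructor <;> linarith
    obtain ⟨c, hc, hc0⟩ := intermediate_value_uIcc hcont h0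
    have hcmem : c ∈ Set.Ioo a b :=
      Set.OrdConnected.uIcc_subset Set.ordConnected_Ioo hx hx₀ hc
    have hcfix : f n c = c := by dsimp at hc0; linarith
    exact hnα c hcmem (huniq c (hab hcmem) hcfix)
  · exact absurd (huniq x (hab hx) heq) (hnα x hx)
  · exact hgt

lemma sign_lemma' (n : ℕ) (α : ℝ) (hα : α ∈ Set.Ioo (0:ℝ) 1)
    (huniq : ∀ t ∈ Set.Ioo (0 : ℝ) 1, f n t = t → t = α)
    {a b : ℝ} (hab : Set.Ioo a b ⊆ Set.Ioo (0:ℝ) 1) (hnα : ∀ x ∈ Set.Ioo a b, x ≠ α)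
    {x₀ : ℝ} (hx₀ : x₀ ∈ Set.Ioo a b) (hx₀f : f n x₀ < x₀) :
    ∀ x ∈ Set.Ioo a b, f n x < x := by
  intro x hx
  rcases lt_trichotomy (f n x) x with hlt | heq | hgt
  · exact hlt
  · exact absurd (huniq x (hab hx) heq) (hnα x hx)
  · exfalso
    have hcont : ContinuousOn (fun y => f n y - y) (Set.uIcc x x₀) :=
      ((f_cont n).sub continuous_id).continuousOn
    have h0 : (0:ℝ) ∈ Set.uIcc (f n x - x) (f n x₀ - x₀) := by
      rw [Set.mem_uIcc]
      right
      constructor <;> linarith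
    obtain ⟨c, hc, hc0⟩ := intermediate_value_uIcc hcont h0
    have hcmem : c ∈ Set.Ioo a b :=
      Set.OrdConnected.uIcc_subset Set.ordConnected_Ioo hx hx₀ hc
    have hcfix : f n c = c := by dsimp at hc0; linarith
    exact hnα c hcmem (huniq c (hab hcmem) hcfix)

theorem stmt_3 (n : ℕ) (hn : 3 ≤ n) (hodd : Odd n) (α : ℝ)
    (hα : α ∈ Set.Ioo (0 : ℝ) 1) (hfix : f n α = α)
    (huniq : ∀ t ∈ Set.Ioo (0 : ℝ) 1, f n t = t → t = α) :
    ∀ x₀ ∈ Set.Ioo (0 : ℝ) 1,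
      Filter.Tendsto (fun m => (f n)^[m] x₀) Filter.atTop (nhds α) := by
  intro x₀ hx₀
  obtain ⟨hα0, hα1⟩ := hα
  obtain ⟨hx₀0, hx₀1⟩ := hx₀
  have hmono := f_mono n hodd
  have hleft : ∀ x ∈ Set.Ioo 0 α, x < f n x := by
    obtain ⟨x₁, hx₁, hfx₁⟩ := left_witness n hn hodd α ⟨hα0, hα1⟩
    exact sign_lemma n α ⟨hα0, hα1⟩ huniq (Set.Ioo_subset_Ioo_right hα1.le)
      (fun x hx => ne_of_lt hx.2) hx₁ hfx₁
  have hright : ∀ x ∈ Set.Ioo α 1, f n x < x := by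
    obtain ⟨x₂, hx₂, hfx₂⟩ := right_witness n hn α ⟨hα0, hα1⟩
    exact sign_lemma' n α ⟨hα0, hα1⟩ huniq (Set.Ioo_subset_Ioo_left hα0.le)
      (fun x hx => ne_of_gt hx.1) hx₂ hfx₂
  set u : ℕ → ℝ := fun m => (f n)^[m] x₀ with hu
  have husucc : ∀ m, u (m+1) = f n (u m) := fun m => Function.iterate_succ_apply' (f n) m x₀
  rcases lt_trichotomy x₀ α with hc | hc | hc
  · -- x₀ < α
    have key : ∀ m, x₀ ≤ u m ∧ u m ≤ α := by
      intro m
      induction m with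
      | zero => exact ⟨le_refl _, hc.le⟩
      | succ k ih =>
        rw [husucc]
        constructor
        · rcases eq_or_lt_of_le ih.2 with heq | hlt
          · rw [heq, hfix]; linarith
          · exact le_of_lt (lt_of_le_of_lt ih.1 (hleft (u k) ⟨lt_of_lt_of_le hx₀0 ih.1, hlt⟩))
        · calc f n (u k) ≤ f n α := hmono ih.2
            _ = α := hfix
      
    have humono : Monotone u := by
      apply monotone_nat_of_le_succ
      intro m
      rw [husucc]
      rcases eq_or_lt_of_le (key m).2 with heq | hlt
      · rw [heq, hfix]
      · exact le_of_lt (hleft (u m) ⟨lt_of_lt_of_le hx₀0 (key m).1, hlt⟩)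
    have hbdd : BddAbove (Set.range u) := ⟨α, by
      rintro y ⟨m, rfl⟩
      exact (key m).2⟩
    have htend := tendsto_atTop_ciSup humono hbdd
    set L := ⨆ m, u m with hL
    have hLα : L ≤ α := ciSup_le (fun m => (key m).2)
    have hLx₀ : x₀ ≤ L := by
      have := le_ciSup hbdd 0
      simpa [hu] using this
    have hfL : f n L = L := by
      have h1 : Tendsto (fun m => u (m+1)) atTop (nhds L) := htend.comp (tendsto_add_atTop_nat 1)
      have h2 : Tendsto (fun m => f n (u m)) atTop (nhds (f n L)) :=
        ((f_cont n).tendsto L).comp htend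
      have h3 : (fun m => u (m+1)) = fun m => f n (u m) := funext husucc
      rw [h3] at h1
      exact tendsto_nhds_unique h2 h1
    have : L = α := huniq L ⟨lt_of_lt_of_le hx₀0 hLx₀, lt_of_le_of_lt hLα hα1⟩ hfL
    rw [← this]
    exact htend
  · -- x₀ = α
    have hconst : ∀ m, u m = α := fun m => by
      simp only [hu, hc]
      exact Function.iterate_fixed hfix m
    exact tendsto_const_nhds.congr (fun m => (hconst m).symm)
  · -- α < x₀
    have key : ∀ m, α ≤ u m ∧ u m ≤ x₀ := by
      intro m
      induction m with
      | zero => exact ⟨hc.le, le_refl _⟩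
      | succ k ih =>
        rw [husucc]
        constructor
        · calc α = f n α := hfix.symm
            _ ≤ f n (u k) := hmono ih.1
        · rcases eq_or_lt_of_le ih.1 with heq | hlt
          · rw [← heq, hfix]; linarith
          · exact le_of_lt (lt_of_lt_of_le
              (hright (u k) ⟨hlt, lt_of_le_of_lt ih.2 hx₀1⟩) ih.2)
    have huanti : Antitone u := by
      apply antitone_nat_of_succ_le
      intro m
      rw [husucc]
      rcases eq_or_lt_of_le (key m).1 with heq | hlt
      · rw [← heq, hfix]
      · exact le_of_lt (hright (u m) ⟨hlt, lt_of_le_of_lt (key m).2 hx₀1⟩)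
    have hbdd : BddBelow (Set.range u) := ⟨α, by
      rintro y ⟨m, rfl⟩
      exact (key m).1⟩
    have htend := tendsto_atTop_ciInf huanti hbdd
    set L := ⨅ m, u m with hL
    have hLα : α ≤ L := le_ciInf (fun m => (key m).1)
    have hLx₀ : L ≤ x₀ := by
      have := ciInf_le hbdd 0
      simpa [hu] using this
    have hfL : f n L = L := by
      have h1 : Tendsto (fun m => u (m+1)) atTop (nhds L) := htend.comp (tendsto_add_atTop_nat 1)
      have h2 : Tendsto (fun m => f n (u m)) atTop (nhds (f n L)) :=
        ((f_cont n).tendsto L).comp htend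
      have h3 : (fun m => u (m+1)) = fun m => f n (u m) := funext husucc
      rw [h3] at h1
      exact tendsto_nhds_unique h2 h1
    have : L = α := huniq L ⟨lt_of_lt_of_le hα0 hLα, lt_of_le_of_lt hLx₀ hx₀1⟩ hfL
    rw [← this]
    exact htend
end

section
/- For every even integer n ≥ 2, the function γ(t) = t·f_n(t) is strictly increasing on the interval (0, 1/2). -/
open Real Filter Finset

private lemma amgm {c d e u v : ℝ} (hc : 0 < c) (hd : 0 ≤ d) (he : e^2 = c * d)
    (hu : 0 ≤ u) (hv : 0 ≤ v) (he0 : 0 ≤ e) :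
    e * (u * v) ≤ c/2 * u^2 + d/2 * v^2 := by
  nlinarith [sq_nonneg (c*u - e*v), mul_nonneg hu hv, sq_nonneg u, sq_nonneg v]

private lemma key_id (j m : ℕ) :
    ((j+1 : ℕ) : ℝ)^2 * (((2*(j+1+m)).choose (2*(j+1)) : ℝ) * (((2*(j+1)).choose (j+1) : ℝ)))
      = (2*m+1) * (2*m+2) * (((2*(j+1+m)).choose (2*j) : ℝ) * ((2*j).choose j : ℝ)) := by
  have h1 := Nat.choose_mul_factorial_mul_factorial (show 2*(j+1) ≤ 2*(j+1+m) by omega)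
  have h3 := Nat.choose_mul_factorial_mul_factorial (show 2*j ≤ 2*(j+1+m) by omega)
  rw [show 2*(j+1+m) - 2*(j+1) = 2*m from by omega] at h1
  rw [show 2*(j+1+m) - 2*j = 2*m+2 from by omega] at h3
  have h2 := Nat.choose_mul_factorial_mul_factorial (show j+1 ≤ 2*(j+1) by omega)
  rw [show 2*(j+1) - (j+1) = j+1 from by omega] at h2
  have h4 := Nat.choose_mul_factorial_mul_factorial (show j ≤ 2*j by omega)
  rw [show 2*j - j = j from by omega] at h4
  have h5 : (j+1).factorial = (j+1) * j.factorial := Nat.factorial_succ j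
  have h6 : (2*m+2).factorial = (2*m+2) * ((2*m+1) * (2*m).factorial) := by
    rw [Nat.factorial_succ, Nat.factorial_succ]
  -- cast to ℝ
  have H1 : (((2*(j+1+m)).choose (2*(j+1)) : ℝ)) * ((2*(j+1)).factorial : ℝ) * ((2*m).factorial : ℝ)
      = ((2*(j+1+m)).factorial : ℝ) := by exact_mod_cast congrArg (Nat.cast : ℕ → ℝ) h1
  have H3 : (((2*(j+1+m)).choose (2*j) : ℝ)) * ((2*j).factorial : ℝ) * ((2*m+2).factorial : ℝ)
      = ((2*(j+1+m)).factorial : ℝ) := by exact_mod_cast congrArg (Nat.cast : ℕ → ℝ) h3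
  have H2 : (((2*(j+1)).choose (j+1) : ℝ)) * ((j+1).factorial : ℝ) * ((j+1).factorial : ℝ)
      = ((2*(j+1)).factorial : ℝ) := by exact_mod_cast congrArg (Nat.cast : ℕ → ℝ) h2
  have H4 : (((2*j).choose j : ℝ)) * (j.factorial : ℝ) * (j.factorial : ℝ)
      = ((2*j).factorial : ℝ) := by exact_mod_cast congrArg (Nat.cast : ℕ → ℝ) h4
  have H5 : ((j+1).factorial : ℝ) = (j+1) * (j.factorial : ℝ) := by exact_mod_cast h5
  have H6 : ((2*m+2).factorial : ℝ) = (2*m+2) * ((2*m+1) * ((2*m).factorial : ℝ)) := by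
    exact_mod_cast h6
  have hpos : (0:ℝ) < (j.factorial : ℝ)^2 * ((2*m).factorial : ℝ) := by positivity
  apply mul_right_cancel₀ (ne_of_gt hpos)
  push_cast
  calc ((j:ℝ)+1)^2 * (((2*(j+1+m)).choose (2*(j+1)) : ℝ) * (((2*(j+1)).choose (j+1) : ℝ)))
        * ((j.factorial : ℝ)^2 * ((2*m).factorial : ℝ))
      = ((2*(j+1+m)).choose (2*(j+1)) : ℝ) * (((2*(j+1)).choose (j+1) : ℝ) * ((j+1).factorial : ℝ) * ((j+1).factorial : ℝ)) * ((2*m).factorial : ℝ) := by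
        rw [H5]; try ring
    _ = ((2*(j+1+m)).choose (2*(j+1)) : ℝ) * ((2*(j+1)).factorial : ℝ) * ((2*m).factorial : ℝ) := by
        rw [H2]; try ring
    _ = ((2*(j+1+m)).factorial : ℝ) := H1
    _ = ((2*(j+1+m)).choose (2*j) : ℝ) * ((2*j).factorial : ℝ) * ((2*m+2).factorial : ℝ) := H3.symm
    _ = ((2*(j+1+m)).choose (2*j) : ℝ) * (((2*j).choose j : ℝ) * (j.factorial : ℝ) * (j.factorial : ℝ)) * ((2*m+2) * ((2*m+1) * ((2*m).factorial : ℝ))) := by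
        rw [H4, H6]
    _ = ((2:ℝ)*m+1) * (2*m+2) * (((2*(j+1+m)).choose (2*j) : ℝ) * ((2*j).choose j : ℝ))
        * ((j.factorial : ℝ)^2 * ((2*m).factorial : ℝ)) := by ring

private lemma D_pos (K : ℕ) (x q : ℝ) (hx : 0 < x) (hq : 0 < q) :
    0 < ∑ k ∈ Finset.range (K+1),
      ((((2*K).choose (2*k)) * ((2*k).choose k) : ℕ) : ℝ) *
        (((2*(K-k)+1 : ℕ) : ℝ) * q^(2*k) * x^(2*(K-k)) - (k:ℝ) * q^(2*k-1) * x^(2*(K-k)+1)) := by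
  set a : ℕ → ℝ := fun k => ((((2*K).choose (2*k)) * ((2*k).choose k) : ℕ) : ℝ) with ha
  set u : ℕ → ℝ := fun k => q^k * x^(K-k) with hu
  set d : ℕ → ℝ := fun k => if k = 0 then 0 else ((2*(K-k)+2 : ℕ) : ℝ) * a (k-1) with hd
  have ha_pos : ∀ k, k ≤ K → 0 < a k := by
    intro k hk
    have h1 : 0 < (2*K).choose (2*k) := Nat.choose_pos (by omega)
    have h2 : 0 < (2*k).choose k := Nat.choose_pos (by omega)
    simp only [ha]
    exact_mod_cast Nat.mul_pos h1 h2
  have hu_pos : ∀ k, 0 < u k := fun k => mul_pos (pow_pos hq _) (pow_pos hx _)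
  have step1 : ∀ k ∈ Finset.range (K+1),
      a k * (((2*(K-k)+1 : ℕ) : ℝ) * q^(2*k) * x^(2*(K-k)) - (k:ℝ) * q^(2*k-1) * x^(2*(K-k)+1))
      = ((2*(K-k)+1 : ℕ) : ℝ) * a k * (u k)^2 - (k:ℝ) * a k * (u k * u (k-1)) := by
    intro k hk
    have hkK : k ≤ K := by simpa [Nat.lt_succ_iff] using Finset.mem_range.mp hk
    rcases k with _ | j
    · simp only [hu, Nat.sub_zero, Nat.cast_zero]
      push_cast
      ring
    · obtain ⟨m, hm⟩ : ∃ m, K = j + 1 + m := ⟨K - (j+1), by omega⟩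
      simp only [hu]
      rw [show K - (j+1) = m from by omega, show (j+1) - 1 = j from by omega,
        show K - j = m + 1 from by omega, show 2*(j+1)-1 = 2*j+1 from by omega]
      push_cast
      ring
  rw [Finset.sum_congr rfl step1]
  have step2 : ∀ k ∈ Finset.range (K+1),
      ((2*(K-k)+1 : ℕ) : ℝ) * a k * (u k)^2 - (((2*(K-k)+1 : ℕ) : ℝ) * a k/2 * (u k)^2 + d k/2 * (u (k-1))^2)
      ≤ ((2*(K-k)+1 : ℕ) : ℝ) * a k * (u k)^2 - (k:ℝ) * a k * (u k * u (k-1)) := by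
    intro k hk
    have hkK : k ≤ K := by simpa [Nat.lt_succ_iff] using Finset.mem_range.mp hk
    apply sub_le_sub_left
    rcases k with _ | j
    · have h0 : (0:ℝ) ≤ a 0 := (ha_pos 0 (by omega)).le
      simp only [hd, if_pos rfl, Nat.cast_zero, zero_mul, zero_div, zero_add]
      nlinarith [mul_nonneg (mul_nonneg (Nat.cast_nonneg (2*(K-0)+1) : (0:ℝ) ≤ _) h0) (sq_nonneg (u 0)),
        sq_nonneg (u (0-1))]
    · obtain ⟨m, hm⟩ : ∃ m, K = j + 1 + m := ⟨K - (j+1), by omega⟩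
      have hkid : ((j:ℝ)+1)^2 * a (j+1) = ((2*(m:ℝ)+1) * (2*(m:ℝ)+2)) * a j := by
        simp only [ha]
        rw [hm]
        have hkey := key_id j m
        push_cast at hkey ⊢
        linear_combination hkey
      have hc : 0 < ((2*(K-(j+1))+1 : ℕ) : ℝ) * a (j+1) := by
        have := ha_pos (j+1) hkK
        positivity
      have hdnn : 0 ≤ d (j+1) := by
        simp only [hd, if_neg (Nat.succ_ne_zero j)]
        have := ha_pos j (by omega)
        positivity
      have he : ((j+1:ℝ) * a (j+1))^2
          = (((2*(K-(j+1))+1 : ℕ) : ℝ) * a (j+1)) * d (j+1) := by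
        simp only [hd, if_neg (Nat.succ_ne_zero j), show (j+1)-1 = j from rfl]
        rw [show K - (j+1) = m from by omega]
        push_cast
        linear_combination a (j+1) * hkid
      have := amgm hc hdnn he (le_of_lt (hu_pos (j+1))) (le_of_lt (hu_pos j)) (by positivity)
      calc ((j+1:ℕ):ℝ) * a (j+1) * (u (j+1) * u ((j+1)-1))
          = ((j+1:ℝ) * a (j+1)) * (u (j+1) * u j) := by norm_num
        _ ≤ ((2*(K-(j+1))+1 : ℕ) : ℝ) * a (j+1)/2 * (u (j+1))^2 + d (j+1)/2 * (u ((j+1)-1))^2 := by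
            simpa using this
  have hb := Finset.sum_le_sum step2
  have hsum0 : ∑ k ∈ Finset.range (K+1),
      (((2*(K-k)+1 : ℕ) : ℝ) * a k * (u k)^2 - (((2*(K-k)+1 : ℕ) : ℝ) * a k/2 * (u k)^2 + d k/2 * (u (k-1))^2))
      = (∑ k ∈ Finset.range (K+1), ((2*(K-k)+1 : ℕ) : ℝ) * a k/2 * (u k)^2)
        - ∑ k ∈ Finset.range (K+1), d k/2 * (u (k-1))^2 := by
    rw [← Finset.sum_sub_distrib]
    exact Finset.sum_congr rfl fun k _ => by ring
  have hsum1 : (∑ k ∈ Finset.range (K+1), d k/2 * (u (k-1))^2)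
      = ∑ k ∈ Finset.range K, d (k+1)/2 * (u k)^2 := by
    rw [Finset.sum_range_succ']
    simp [hd]
  have hsum2 : (∑ k ∈ Finset.range K, d (k+1)/2 * (u k)^2)
      ≤ ∑ k ∈ Finset.range K, ((2*(K-k)+1 : ℕ) : ℝ) * a k/2 * (u k)^2 := by
    apply Finset.sum_le_sum
    intro k hk
    have hkK : k < K := Finset.mem_range.mp hk
    have hle : d (k+1) ≤ ((2*(K-k)+1 : ℕ) : ℝ) * a k := by
      simp only [hd, if_neg (Nat.succ_ne_zero k), show (k+1)-1 = k from rfl]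
      have h1 : (2*(K-(k+1))+2 : ℕ) ≤ (2*(K-k)+1 : ℕ) := by omega
      have h2 : 0 ≤ a k := le_of_lt (ha_pos k (by omega))
      exact mul_le_mul_of_nonneg_right (by exact_mod_cast h1) h2
    have := sq_nonneg (u k)
    nlinarith [this, hle]
  have hsum3 : (∑ k ∈ Finset.range (K+1), ((2*(K-k)+1 : ℕ) : ℝ) * a k/2 * (u k)^2)
      = (∑ k ∈ Finset.range K, ((2*(K-k)+1 : ℕ) : ℝ) * a k/2 * (u k)^2)
        + ((2*(K-K)+1 : ℕ) : ℝ) * a K/2 * (u K)^2 := Finset.sum_range_succ _ K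
  have hlast : 0 < ((2*(K-K)+1 : ℕ) : ℝ) * a K/2 * (u K)^2 := by
    have := ha_pos K le_rfl
    have := hu_pos K
    positivity
  calc (0:ℝ) < ((2*(K-K)+1 : ℕ) : ℝ) * a K/2 * (u K)^2 := hlast
    _ ≤ _ := by
      rw [hsum0, hsum1] at hb
      linarith [hb, hsum2, hsum3.ge, hsum3.le]

theorem stmt_5 (n : ℕ) (hn : 2 ≤ n) (heven : Even n) :
    StrictMonoOn (fun t : ℝ => t * f n t) (Set.Ioo (0 : ℝ) (1 / 2)) := by
  obtain ⟨K, hK⟩ := heven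
  have hn2 : n = 2 * K := by omega
  subst hn2
  have hfun : (fun t : ℝ => t * f (2*K) t)
      = fun t : ℝ => ∑ k ∈ Finset.range (K+1),
          ((((2*K).choose (2*k)) * ((2*k).choose k) : ℕ) : ℝ) *
            (((1-t)/2)^(2*k) * t^(2*K-2*k+1)) := by
    funext t
    simp only [f, show (2*K)/2 = K from by omega]
    rw [Finset.mul_sum]
    refine Finset.sum_congr rfl fun k hk => ?_
    rw [pow_succ]
    push_cast
    ring
  have hderiv : ∀ x : ℝ, HasDerivAt (fun t : ℝ => t * f (2*K) t)
      (∑ k ∈ Finset.range (K+1),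
        ((((2*K).choose (2*k)) * ((2*k).choose k) : ℕ) : ℝ) *
          ((↑(2*k) * ((1-x)/2)^(2*k-1) * (-1/2)) * x^(2*K-2*k+1)
            + ((1-x)/2)^(2*k) * (↑(2*K-2*k+1) * x^(2*K-2*k+1-1)))) x := by
    intro x
    rw [hfun]
    apply HasDerivAt.fun_sum
    intro k hk
    have h1 : HasDerivAt (fun t : ℝ => ((1-t)/2)^(2*k))
        ((↑(2*k) * ((1-x)/2)^(2*k-1)) * (-1/2)) x := by
      have h := (((hasDerivAt_id x).const_sub 1).div_const 2).fun_pow (2*k)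
      exact h
    have h2 : HasDerivAt (fun t : ℝ => t^(2*K-2*k+1))
        (↑(2*K-2*k+1) * x^(2*K-2*k+1-1)) x := hasDerivAt_pow _ x
    have h3 := (h1.fun_mul h2).const_mul ((((2*K).choose (2*k)) * ((2*k).choose k) : ℕ) : ℝ)
    convert h3 using 1 <;> ring
  apply strictMonoOn_of_deriv_pos (convex_Ioo 0 (1/2))
  · apply Continuous.continuousOn
    apply Continuous.mul continuous_id
    unfold f
    exact continuous_finset_sum _ (fun k _ => by fun_prop)
  · intro x hx
    rw [interior_Ioo] at hx
    obtain ⟨hx0, hx2⟩ := hx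
    rw [(hderiv x).deriv]
    have hq : 0 < (1-x)/2 := by norm_num at hx2 ⊢; linarith
    refine lt_of_lt_of_le (D_pos K x ((1-x)/2) hx0 hq) (le_of_eq ?_)
    refine Finset.sum_congr rfl fun k hk => ?_
    have hkK : k ≤ K := by simpa [Nat.lt_succ_iff] using Finset.mem_range.mp hk
    rw [show 2*K-2*k+1-1 = 2*(K-k) from by omega, show 2*K-2*k+1 = 2*(K-k)+1 from by omega]
    push_cast
    ring
end

section
/- For every even integer n ≥ 2 and every t ∈ [0,1], one has f_n(t) ≥ 1/√(2π(n+1)). -/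
open Real Filter Finset

namespace Stmt6Aux

open intervalIntegral

lemma cos_int_odd (j : ℕ) (hj : Odd j) : (∫ θ in (0:ℝ)..π, cos θ ^ j) = 0 := by
  have h1 : (∫ θ in (0:ℝ)..π, cos (π - θ) ^ j) = ∫ θ in (0:ℝ)..π, cos θ ^ j := by
    rw [intervalIntegral.integral_comp_sub_left (fun x => cos x ^ j) π]
    norm_num
  have h2 : (∫ θ in (0:ℝ)..π, cos (π - θ) ^ j) = - ∫ θ in (0:ℝ)..π, cos θ ^ j := by
    rw [← intervalIntegral.integral_neg]
    apply intervalIntegral.integral_congr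
    intro x _
    simp [Real.cos_pi_sub, hj.neg_pow]
  linarith [h1.symm.trans h2]

lemma cos_int_reflect (j : ℕ) :
    (∫ θ in (-π)..(0:ℝ), cos θ ^ j) = ∫ θ in (0:ℝ)..π, cos θ ^ j := by
  have h := intervalIntegral.integral_comp_neg (fun x => cos x ^ j) (a := 0) (b := π)
  simpa [Real.cos_neg] using h.symm

lemma cos_int_full (j : ℕ) :
    (∫ θ in (-π)..(π:ℝ), cos θ ^ j) = 2 * ∫ θ in (0:ℝ)..π, cos θ ^ j := by
  have hint : ∀ a b : ℝ, IntervalIntegrable (fun θ => cos θ ^ j) MeasureTheory.volume a b :=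
    fun a b => (continuous_cos.pow j).intervalIntegrable a b
  have h := intervalIntegral.integral_add_adjacent_intervals (a := -π) (b := 0) (c := π)
    (hint _ _) (hint _ _)
  rw [← h, cos_int_reflect]
  ring

lemma cos_int_even (k : ℕ) :
    (∫ θ in (0:ℝ)..π, cos θ ^ (2*k)) = ∫ θ in (0:ℝ)..π, sin θ ^ (2*k) := by
  have hint : ∀ a b : ℝ, IntervalIntegrable (fun θ => cos θ ^ (2*k)) MeasureTheory.volume a b :=
    fun a b => (continuous_cos.pow _).intervalIntegrable a b
  have h := intervalIntegral.integral_add_adjacent_intervals (a := 0) (b := π/2) (c := π)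
    (hint _ _) (hint _ _)
  have h2 : (∫ θ in (π/2:ℝ)..π, cos θ ^ (2*k)) = ∫ θ in (0:ℝ)..π/2, cos θ ^ (2*k) := by
    have h3 := intervalIntegral.integral_comp_sub_left (fun x => cos x ^ (2*k)) π
      (a := 0) (b := π/2)
    have h4 : (∫ θ in (0:ℝ)..π/2, cos (π - θ) ^ (2*k)) = ∫ θ in (0:ℝ)..π/2, cos θ ^ (2*k) := by
      apply intervalIntegral.integral_congr
      intro x _
      simp [Real.cos_pi_sub, (even_two_mul k).neg_pow]
    rw [h4] at h3
    have he : π - π/2 = π/2 := by ring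
    rw [he, sub_zero] at h3
    exact h3.symm
  rw [← h, h2, ← two_mul, EulerSine.integral_cos_pow_eq]
  ring

lemma cos_int_full_even (k : ℕ) :
    (∫ θ in (-π)..(π:ℝ), cos θ ^ (2*k)) =
      2 * π * ∏ i ∈ range k, (2 * (i:ℝ) + 1) / (2 * i + 2) := by
  rw [cos_int_full, cos_int_even, integral_sin_pow_even]
  ring

lemma prod_eq_choose (k : ℕ) :
    (∏ i ∈ range k, (2 * (i:ℝ) + 1) / (2 * i + 2)) = ((2*k).choose k : ℝ) / 4 ^ k := by
  induction k with
  | zero => simp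
  | succ k ih =>
    rw [prod_range_succ, ih]
    have h := Nat.succ_mul_centralBinom_succ k
    unfold Nat.centralBinom at h
    have h' : ((k:ℝ) + 1) * ((2*(k+1)).choose (k+1) : ℝ) = 2*(2*(k:ℝ)+1) * ((2*k).choose k) := by
      exact_mod_cast congrArg (fun x : ℕ => (x : ℝ)) h
    have h1 : (2*(k:ℝ)+2) ≠ 0 := by positivity
    have h2 : (4:ℝ)^k ≠ 0 := by positivity
    have h3 : ((k:ℝ)+1) ≠ 0 := by positivity
    field_simp
    push_cast
    linear_combination (-2*(4:ℝ)^k) * h'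

lemma prod_pos' (k : ℕ) : 0 < ∏ i ∈ range k, (2 * (i:ℝ) + 1) / (2 * i + 2) := by
  apply Finset.prod_pos
  intro i _
  positivity

lemma key_identity (m : ℕ) :
    Real.Wallis.W m * (∏ i ∈ range m, (2 * (i:ℝ) + 1) / (2 * i + 2)) ^ 2 * (2 * m + 1) = 1 := by
  induction m with
  | zero => simp [Real.Wallis.W]
  | succ m ih =>
    rw [Real.Wallis.W_succ, prod_range_succ]
    have h1 : (2*(m:ℝ)+1) ≠ 0 := by positivity
    have h2 : (2*(m:ℝ)+2) ≠ 0 := by positivity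
    have h3 : (2*(m:ℝ)+3) ≠ 0 := by positivity
    have hgoal : Real.Wallis.W m * ((2 * (m:ℝ) + 2) / (2 * m + 1) * ((2 * m + 2) / (2 * m + 3))) *
        ((∏ i ∈ range m, (2 * (i:ℝ) + 1) / (2 * i + 2)) * ((2 * m + 1) / (2 * m + 2))) ^ 2 *
        (2 * (m + 1 : ℕ) + 1) =
        Real.Wallis.W m * (∏ i ∈ range m, (2 * (i:ℝ) + 1) / (2 * i + 2)) ^ 2 * (2 * m + 1) := by
      push_cast
      field_simp
      ring
    rw [hgoal, ih]

lemma f_eq_integral (n : ℕ) (t : ℝ) :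
    f n t = (2*π)⁻¹ * ∫ θ in (-π)..(π:ℝ), (t + (1 - t) * cos θ) ^ n := by
  have expand : (∫ θ in (-π)..(π:ℝ), (t + (1 - t) * cos θ) ^ n)
      = ∑ j ∈ range (n+1),
          ((1-t)^j * t^(n-j) * (n.choose j : ℝ)) * ∫ θ in (-π)..(π:ℝ), cos θ ^ j := by
    have hθ : ∀ θ : ℝ, (t + (1 - t) * cos θ) ^ n =
        ∑ j ∈ range (n+1), ((1-t)^j * t^(n-j) * (n.choose j : ℝ)) * cos θ ^ j := by
      intro θ
      rw [add_comm, add_pow]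
      apply Finset.sum_congr rfl
      intro j _
      rw [mul_pow]
      ring
    simp_rw [hθ]
    rw [intervalIntegral.integral_finset_sum]
    · exact Finset.sum_congr rfl fun j _ => intervalIntegral.integral_const_mul _ _
    · intro j _
      exact ((continuous_const.mul (continuous_cos.pow j)).intervalIntegrable _ _)
  rw [expand, Finset.mul_sum]
  have hzero : ∀ j ∈ range (n+1),
      (2*π)⁻¹ * (((1-t)^j * t^(n-j) * (n.choose j : ℝ)) * ∫ θ in (-π)..(π:ℝ), cos θ ^ j) ≠ 0 →
      Even j := by
    intro j _ hne
    by_contra hodd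
    apply hne
    rw [cos_int_full, cos_int_odd j (Nat.not_even_iff_odd.mp hodd)]
    ring
  rw [← Finset.sum_filter_of_ne hzero]
  unfold f
  apply Finset.sum_nbij' (fun k => 2 * k) (fun j => j / 2)
  · intro k hk
    simp only [Finset.mem_filter, Finset.mem_range] at *
    constructor
    · omega
    · exact even_two_mul k
  · intro j hj
    simp only [Finset.mem_filter, Finset.mem_range] at *
    omega
  · intro k _
    omega
  · intro j hj
    simp only [Finset.mem_filter, Finset.mem_range] at hj
    obtain ⟨-, q, hq⟩ := hj
    omega
  · intro k _
    rw [cos_int_full_even, prod_eq_choose]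
    have hπ : (π:ℝ) ≠ 0 := Real.pi_ne_zero
    have h4 : ((1-t)/2) ^ (2*k) = (1-t)^(2*k) / 4^k := by
      rw [div_pow]
      congr 1
      rw [pow_mul]
      norm_num
    rw [h4]
    field_simp

lemma final_bound (m : ℕ) :
    1 / Real.sqrt (2 * π * (2 * (m:ℝ) + 1)) ≤
      (∏ i ∈ range m, (2 * (i:ℝ) + 1) / (2 * i + 2)) / 2 := by
  set p := ∏ i ∈ range m, (2 * (i:ℝ) + 1) / (2 * i + 2) with hp
  have hppos : 0 < p := prod_pos' m
  have hkey := key_identity m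
  have hW := Real.Wallis.W_le m
  have hWpos := Real.Wallis.W_pos m
  have hX : (0:ℝ) < 2 * π * (2 * (m:ℝ) + 1) := by positivity
  have hsq : (2 / p) ^ 2 = 4 * (Real.Wallis.W m * (2 * (m:ℝ) + 1)) := by
    have hpne : p ≠ 0 := ne_of_gt hppos
    field_simp
    nlinarith [hkey]
  have h2p : 2 / p ≤ Real.sqrt (2 * π * (2 * (m:ℝ) + 1)) := by
    rw [show (2:ℝ)/p = Real.sqrt ((2/p)^2) from (Real.sqrt_sq (by positivity)).symm]
    apply Real.sqrt_le_sqrt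
    rw [hsq]
    nlinarith [hW]
  have h1 : 1 / Real.sqrt (2 * π * (2 * (m:ℝ) + 1)) ≤ 1 / (2 / p) := by
    apply one_div_le_one_div_of_le (by positivity) h2p
  calc 1 / Real.sqrt (2 * π * (2 * (m:ℝ) + 1)) ≤ 1 / (2 / p) := h1
    _ = p / 2 := one_div_div _ _

end Stmt6Aux

theorem stmt_6 (n : ℕ) (hn : 2 ≤ n) (heven : Even n) (t : ℝ)
    (ht : t ∈ Set.Icc (0 : ℝ) 1) :
    f n t ≥ 1 / Real.sqrt (2 * π * (n + 1)) := by
  obtain ⟨ht0, ht1⟩ := ht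
  obtain ⟨m, hm⟩ := heven
  have hmn : n = 2 * m := by omega
  subst hmn
  clear hm hn
  have hcont : Continuous (fun θ : ℝ => (t + (1 - t) * cos θ) ^ (2*m)) := by fun_prop
  have hint : ∀ a b : ℝ,
      IntervalIntegrable (fun θ : ℝ => (t + (1 - t) * cos θ) ^ (2*m))
        MeasureTheory.volume a b := fun a b => hcont.intervalIntegrable a b
  have hcint : ∀ a b : ℝ,
      IntervalIntegrable (fun θ : ℝ => cos θ ^ (2*m)) MeasureTheory.volume a b :=
    fun a b => (continuous_cos.pow _).intervalIntegrable a b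
  have hnn : ∀ x : ℝ, 0 ≤ (t + (1 - t) * cos x) ^ (2*m) :=
    fun x => (even_two_mul m).pow_nonneg _
  -- split the integral
  have hA := intervalIntegral.integral_add_adjacent_intervals (a := -π) (b := -(π/2)) (c := π)
    (hint _ _) (hint _ _)
  have hB := intervalIntegral.integral_add_adjacent_intervals (a := -(π/2)) (b := π/2) (c := π)
    (hint _ _) (hint _ _)
  have hpos1 : 0 ≤ ∫ θ in (-π)..(-(π/2)), (t + (1 - t) * cos θ) ^ (2*m) := by
    apply intervalIntegral.integral_nonneg (by linarith [pi_pos])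
    intro x _; exact hnn x
  have hpos2 : 0 ≤ ∫ θ in (π/2)..π, (t + (1 - t) * cos θ) ^ (2*m) := by
    apply intervalIntegral.integral_nonneg (by linarith [pi_pos])
    intro x _; exact hnn x
  have hmono : (∫ θ in (-(π/2))..(π/2), cos θ ^ (2*m)) ≤
      ∫ θ in (-(π/2))..(π/2), (t + (1 - t) * cos θ) ^ (2*m) := by
    apply intervalIntegral.integral_mono_on (by linarith [pi_pos]) (hcint _ _) (hint _ _)
    intro x hx
    have hc0 : 0 ≤ cos x := by
      apply Real.cos_nonneg_of_mem_Icc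
      constructor
      · exact hx.1
      · exact hx.2
    have hc1 : cos x ≤ 1 := Real.cos_le_one x
    have hle : cos x ≤ t + (1 - t) * cos x := by nlinarith
    exact pow_le_pow_left₀ hc0 hle _
  -- value of the middle cosine integral
  have hmid : (∫ θ in (-(π/2))..(π/2), cos θ ^ (2*m)) =
      π * ∏ i ∈ range m, (2 * (i:ℝ) + 1) / (2 * i + 2) := by
    have hsplit := intervalIntegral.integral_add_adjacent_intervals (a := -(π/2)) (b := 0)
      (c := π/2) (hcint _ _) (hcint _ _)
    have hrefl : (∫ θ in (-(π/2))..(0:ℝ), cos θ ^ (2*m)) =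
        ∫ θ in (0:ℝ)..(π/2), cos θ ^ (2*m) := by
      have h := intervalIntegral.integral_comp_neg (fun x => cos x ^ (2*m)) (a := 0) (b := π/2)
      simpa [Real.cos_neg] using h.symm
    rw [← hsplit, hrefl, ← two_mul, EulerSine.integral_cos_pow_eq, integral_sin_pow_even]
    ring
  have hf := Stmt6Aux.f_eq_integral (2*m) t
  set p := ∏ i ∈ range m, (2 * (i:ℝ) + 1) / (2 * i + 2) with hpdef
  have hppos : 0 < p := Stmt6Aux.prod_pos' m
  have hge : f (2*m) t ≥ p / 2 := by
    rw [hf]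
    have hineq : (π * p) ≤ ∫ θ in (-π)..(π:ℝ), (t + (1 - t) * cos θ) ^ (2*m) := by
      rw [← hA, ← hB]
      rw [← hmid]
      linarith [hmono, hpos1, hpos2]
    have h2π : (0:ℝ) < (2*π)⁻¹ := by positivity
    calc (2*π)⁻¹ * ∫ θ in (-π)..(π:ℝ), (t + (1 - t) * cos θ) ^ (2*m)
        ≥ (2*π)⁻¹ * (π * p) := by
          apply mul_le_mul_of_nonneg_left hineq (le_of_lt h2π)
      _ = p / 2 := by field_simp [Real.pi_ne_zero]
  have hfinal := Stmt6Aux.final_bound m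
  have hcast : ((2*m : ℕ) : ℝ) + 1 = 2 * (m:ℝ) + 1 := by push_cast; ring
  rw [ge_iff_le, hcast]
  calc 1 / Real.sqrt (2 * π * (2 * (m:ℝ) + 1)) ≤ p / 2 := hfinal
    _ ≤ f (2*m) t := hge
end

section
/- There exists a natural number n_0 such that for every even integer n > n_0, the derivative of f_n at the point 1/√(2π(n+1)) is strictly positive: f_n′(1/√(2π(n+1))) > 0. -/
open Real Filter Finset

open intervalIntegral

lemma intcos_step (n : ℕ) : (∫ x in (0:ℝ)..π, cos x ^ (n+2)) =
    (n+1)/(n+2) * ∫ x in (0:ℝ)..π, cos x ^ n := by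
  rw [integral_cos_pow]
  simp

lemma intcos_odd (k : ℕ) : (∫ x in (0:ℝ)..π, cos x ^ (2*k+1)) = 0 := by
  induction k with
  | zero => simp
  | succ k ih =>
    have : 2*(k+1)+1 = (2*k+1)+2 := by ring
    rw [this, intcos_step, ih, mul_zero]

lemma intcos_even (k : ℕ) : (∫ x in (0:ℝ)..π, cos x ^ (2*k)) =
    π * ((2*k).choose k) / 4^k := by
  induction k with
  | zero => simp
  | succ k ih =>
    have h2 : 2*(k+1) = (2*k)+2 := by ring
    rw [h2, intcos_step, ih]
    have hc := Nat.succ_mul_centralBinom_succ k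
    simp only [Nat.centralBinom, Nat.mul_succ] at hc
    have hc' : ((k:ℝ)+1) * ((2*(k+1)).choose (k+1)) = 2*(2*k+1) * ((2*k).choose k) := by
      exact_mod_cast hc
    have h4 : (4:ℝ)^(k+1) = 4 * 4^k := by ring
    rw [h4]
    field_simp
    push_cast [Nat.mul_succ] at hc' ⊢
    linear_combination (-(2:ℝ)) * hc'

lemma sum_even_range (n : ℕ) (a : ℕ → ℝ) (h : ∀ j, Odd j → a j = 0) :
    ∑ j ∈ Finset.range (n+1), a j = ∑ k ∈ Finset.range (n/2+1), a (2*k) := by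
  rw [← Finset.sum_filter_add_sum_filter_not (Finset.range (n+1)) (Even ·) a]
  have h2 : ∑ j ∈ (Finset.range (n+1)).filter (fun j => ¬ Even j), a j = 0 := by
    apply Finset.sum_eq_zero; intro j hj
    simp only [Finset.mem_filter] at hj
    exact h j (Nat.not_even_iff_odd.mp hj.2)
  rw [h2, add_zero]
  refine Finset.sum_nbij' (fun j => j/2) (fun k => 2*k) ?_ ?_ ?_ ?_ ?_
  · intro j hj
    simp only [Finset.mem_filter, Finset.mem_range] at hj ⊢
    obtain ⟨r, hr⟩ := hj.2
    omega
  · intro k hk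
    simp only [Finset.mem_filter, Finset.mem_range] at hk ⊢
    exact ⟨by omega, even_two_mul k⟩
  · intro j hj
    simp only [Finset.mem_filter, Finset.mem_range] at hj
    obtain ⟨r, hr⟩ := hj.2
    omega
  · intro k _; omega
  · intro j hj
    simp only [Finset.mem_filter, Finset.mem_range] at hj
    obtain ⟨r, hr⟩ := hj.2
    congr 1; omega

lemma f_eq (n : ℕ) (t : ℝ) :
    f n t = (1/π) * ∫ θ in (0:ℝ)..π, (t + (1-t) * cos θ)^n := by
  have hexp : (fun θ : ℝ => (t + (1-t) * cos θ)^n)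
      = fun θ => ∑ j ∈ Finset.range (n+1), (1-t)^j * (n.choose j) * t^(n-j) * cos θ ^ j := by
    funext θ
    rw [add_comm, add_pow]
    apply Finset.sum_congr rfl
    intro j _; rw [mul_pow]; ring
  rw [hexp, integral_finset_sum (fun j _ =>
    (Continuous.intervalIntegrable (by continuity) 0 π)),
    Finset.sum_congr rfl (fun j _ => integral_const_mul _ _)]
  rw [sum_even_range n (fun j => (1-t)^j * (n.choose j) * t^(n-j) * ∫ θ in (0:ℝ)..π, cos θ ^ j)
    (by intro j ⟨r, hr⟩; subst hr
        rw [intcos_odd r]; ring)]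
  rw [Finset.mul_sum]
  apply Finset.sum_congr rfl
  intro k _
  rw [intcos_even k]
  have h4 : ((1-t)/2)^(2*k) = (1-t)^(2*k) / 4^k := by
    rw [div_pow]
    congr 1
    rw [pow_mul]; norm_num
  rw [h4]
  field_simp

lemma helper (N p : ℕ) (s : ℝ) :
    (∫ θ in (0:ℝ)..π, (1-cos θ)^p * (s*(1-cos θ)+cos θ)^N)
      = ∑ i ∈ Finset.range (N+1),
        (N.choose i : ℝ) * (∫ θ in (0:ℝ)..π, (1-cos θ)^(i+p) * cos θ^(N-i)) * s^i := by
  have hexp : (fun θ : ℝ => (1-cos θ)^p * (s*(1-cos θ)+cos θ)^N)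
      = fun θ => ∑ i ∈ Finset.range (N+1),
          ((N.choose i : ℝ) * s^i) * ((1-cos θ)^(i+p) * cos θ^(N-i)) := by
    funext θ
    rw [add_pow, Finset.mul_sum]
    apply Finset.sum_congr rfl
    intro i _
    rw [mul_pow, pow_add]
    ring
  rw [hexp, integral_finset_sum (fun i _ =>
    (Continuous.intervalIntegrable (by continuity) 0 π))]
  apply Finset.sum_congr rfl
  intro i _
  rw [integral_const_mul]
  ring

lemma f_hasDeriv (m : ℕ) (t : ℝ) :
    HasDerivAt (f (m+1))
      ((m+1)/π * ∫ θ in (0:ℝ)..π, (1 - cos θ) * (t + (1-t) * cos θ)^m) t := by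
  set J : ℕ → ℝ := fun i => ∫ θ in (0:ℝ)..π, (1-cos θ)^i * cos θ^(m+1-i) with hJ
  have hF : f (m+1) = fun s => ∑ i ∈ Finset.range (m+2),
      (((m+1).choose i : ℝ) * J i / π) * s^i := by
    funext s
    rw [f_eq]
    have h1 : (fun θ : ℝ => (s + (1-s) * cos θ)^(m+1))
        = fun θ => (1-cos θ)^0 * (s*(1-cos θ)+cos θ)^(m+1) := by
      funext θ; rw [pow_zero, one_mul]; ring_nf
    rw [h1, helper (m+1) 0 s, Finset.mul_sum]
    apply Finset.sum_congr rfl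
    intro i _
    simp only [hJ, add_zero]
    ring
  have hd : HasDerivAt (f (m+1))
      (∑ i ∈ Finset.range (m+2),
        (((m+1).choose i : ℝ) * J i / π) * (i * t^(i-1))) t := by
    rw [hF]
    exact HasDerivAt.fun_sum fun i _ => (hasDerivAt_pow i t).const_mul _
  convert hd using 1
  have h2 : (fun θ : ℝ => (1 - cos θ) * (t + (1-t) * cos θ)^m)
      = fun θ => (1-cos θ)^1 * (t*(1-cos θ)+cos θ)^m := by
    funext θ; rw [pow_one]; ring_nf
  rw [h2, helper m 1 t, Finset.mul_sum]
  conv_rhs => rw [Finset.sum_range_succ']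
  simp only [Nat.cast_zero, zero_mul, mul_zero, add_zero]
  apply Finset.sum_congr rfl
  intro i _
  have hc : ((m+1).choose (i+1) : ℝ) * (i+1) = (m+1) * (m.choose i) := by
    have := Nat.add_one_mul_choose_eq m i
    exact_mod_cast congrArg (Nat.cast (R := ℝ)) this.symm
  have hJi : J (i+1) = ∫ θ in (0:ℝ)..π, (1-cos θ)^(i+1) * cos θ^(m-i) := by
    simp only [hJ, Nat.succ_sub_succ]
  rw [hJi, Nat.add_sub_cancel]
  push_cast
  have hpi := pi_ne_zero
  field_simp
  linear_combination (-(t^i) * (∫ θ in (0:ℝ)..π, (1-cos θ)^(i+1) * cos θ^(m-i))) * hc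

lemma exp_neg_two_mul_le {x : ℝ} (h0 : 0 ≤ x) (h2 : x ≤ 1/2) : exp (-(2*x)) ≤ 1 - x := by
  have h1 : 1 + 2*x ≤ exp (2*x) := by
    have := Real.add_one_le_exp (2*x); linarith
  have hp : (0:ℝ) < 1 + 2*x := by linarith
  have he : (0:ℝ) < exp (2*x) := exp_pos _
  rw [Real.exp_neg]
  have h3 : (exp (2*x))⁻¹ ≤ (1+2*x)⁻¹ := by
    apply inv_anti₀ hp h1
  refine h3.trans ?_
  rw [inv_le_iff_one_le_mul₀ hp]
  nlinarith

lemma exp_quart {x : ℝ} (h0 : 0 ≤ x) : x^4/256 ≤ exp x := by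
  have h1 : 1 + x/4 ≤ exp (x/4) := by
    have := Real.add_one_le_exp (x/4); linarith
  have h2 : (x/4)^4 ≤ (1+x/4)^4 := by
    apply pow_le_pow_left₀ (by linarith) (by linarith)
  have h3 : (1+x/4)^4 ≤ exp (x/4)^4 := by
    apply pow_le_pow_left₀ (by linarith) h1
  have h4 : exp (x/4)^4 = exp x := by
    rw [← Real.exp_nat_mul]; norm_num; rw [mul_div_cancel₀]; norm_num
  nlinarith

set_option maxHeartbeats 1000000 in
theorem stmt_7 :
    ∃ n₀ : ℕ, ∀ n : ℕ, n₀ < n → Even n →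
      0 < deriv (f n) (1 / Real.sqrt (2 * π * (n + 1))) := by
  use 10^15
  intro n hn hev
  obtain ⟨m, rfl⟩ : ∃ m, n = m + 1 := ⟨n - 1, by omega⟩
  have hNn : ((10:ℝ)^15) < (m:ℝ) + 1 := by exact_mod_cast hn
  clear hn hev
  set N : ℝ := (m:ℝ) + 1 with hNdef
  have hNbig : (1000000000000000:ℝ) < N := by
    calc (1000000000000000:ℝ) = 10^15 := by norm_num
      _ < N := hNn
  have hmN : (m:ℝ) = N - 1 := by rw [hNdef]; ring
  clear_value N
  clear hNn
  have hNpos : 0 < N := by linarith only [hNbig]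
  have hsN : (30000000:ℝ) ≤ Real.sqrt N := by
    rw [Real.le_sqrt (by norm_num) hNpos.le]; norm_num; linarith only [hNbig]
  have hsNpos : 0 < Real.sqrt N := by linarith only [hsN]
  have hNsq : Real.sqrt N ^ 2 = N := Real.sq_sqrt hNpos.le
  have hpi1 : π < 3.15 := pi_lt_d2
  have hpi2 : 3.14 < π := pi_gt_d2
  -- the evaluation point
  rw [show ((m+1:ℕ):ℝ) = N from by rw [hNdef]; push_cast; ring]
  set t : ℝ := 1 / Real.sqrt (2 * π * (N + 1)) with htdef
  have hspos : 0 < Real.sqrt (2*π*(N+1)) := Real.sqrt_pos.mpr (by positivity)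
  have htpos : 0 < t := by rw [htdef]; positivity
  have hslb : Real.sqrt N ≤ Real.sqrt (2*π*(N+1)) := by
    apply Real.sqrt_le_sqrt
    have h6 : (6:ℝ)*(N+1) ≤ 2*π*(N+1) :=
      mul_le_mul_of_nonneg_right (by linarith only [hpi2]) (by linarith only [hNpos])
    linarith only [h6, hNpos]
  have hsub : Real.sqrt (2*π*(N+1)) ≤ 3 * Real.sqrt N := by
    rw [show (3:ℝ) * Real.sqrt N = Real.sqrt (9*N) by
      rw [show (9:ℝ)*N = 3^2*N by ring, Real.sqrt_mul (by norm_num), Real.sqrt_sq (by norm_num)]]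
    apply Real.sqrt_le_sqrt
    have h63 : 2*π*(N+1) ≤ (63/10:ℝ)*(N+1) :=
      mul_le_mul_of_nonneg_right (by linarith only [hpi1]) (by linarith only [hNpos])
    linarith only [h63, hNbig]
  have ht_ub : t ≤ 1 / Real.sqrt N := by
    rw [htdef]; exact one_div_le_one_div_of_le hsNpos hslb
  have ht_lb : 1 / (3 * Real.sqrt N) ≤ t := by
    rw [htdef]; exact one_div_le_one_div_of_le hspos hsub
  clear_value t
  have hat : 1 / Real.sqrt N ≤ 1/3 := by
    rw [div_le_div_iff₀ hsNpos (by norm_num)]; linarith only [hsN]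
  have ht13 : t ≤ 1/3 := ht_ub.trans hat
  -- derivative
  rw [(f_hasDeriv m t).deriv]
  apply mul_pos (by positivity)
  -- the integrand
  set g : ℝ → ℝ := fun θ => (1 - cos θ) * (t + (1-t) * cos θ)^m with hgdef
  have hgc : Continuous g := by rw [hgdef]; fun_prop
  have hint : ∀ u v : ℝ, IntervalIntegrable g MeasureTheory.volume u v :=
    fun u v => hgc.intervalIntegrable u v
  have hgval : ∀ θ, g θ = (1 - cos θ) * (t + (1-t) * cos θ)^m := fun θ => by rw [hgdef]
  clear_value g
  set a : ℝ := 1 / Real.sqrt N with hadef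
  set b : ℝ := 2 / Real.sqrt N with hbdef
  have hab : a ≤ b := by
    rw [hadef, hbdef, div_le_div_iff₀ hsNpos hsNpos]
    linarith only [hsNpos]
  have ha_pos : 0 < a := by rw [hadef]; positivity
  have hb_half : b ≤ 1/2 := by
    rw [hbdef, div_le_div_iff₀ hsNpos (by norm_num)]; linarith only [hsN]
  have hasq : a^2 = 1/N := by rw [hadef, div_pow, one_pow, hNsq]
  have hbsq : b^2 = 4/N := by rw [hbdef, div_pow, hNsq]; norm_num
  have hba : b - a = a := by rw [hadef, hbdef]; ring
  clear_value a b
  have hb_pi2 : b ≤ π/2 := by linarith only [hb_half, pi_gt_three]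
  -- split the integral
  have E1 := integral_add_adjacent_intervals (hint 0 a) (hint a π)
  have E2 := integral_add_adjacent_intervals (hint a b) (hint b π)
  have E3 := integral_add_adjacent_intervals (hint b (π/2)) (hint (π/2) π)
  -- nonneg on [0, π/2]
  have hg_nonneg : ∀ θ ∈ Set.Icc (0:ℝ) (π/2), 0 ≤ g θ := by
    intro θ hθ
    have hc0 : 0 ≤ cos θ := Real.cos_nonneg_of_mem_Icc (by
      constructor
      · linarith only [hθ.1, pi_pos]
      · exact hθ.2)
    rw [hgval]
    have h1 : (0:ℝ) ≤ 1 - t := by linarith only [ht13]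
    have h2 : 0 ≤ t + (1-t)*cos θ := by
      have := mul_nonneg h1 hc0
      linarith only [this, htpos]
    exact mul_nonneg (by linarith only [Real.cos_le_one θ]) (pow_nonneg h2 m)
  have hI1 : 0 ≤ ∫ θ in (0:ℝ)..a, g θ := by
    apply integral_nonneg ha_pos.le
    intro u hu
    exact hg_nonneg u ⟨hu.1, by linarith only [hu.2, hab, hb_pi2]⟩
  have hI3 : 0 ≤ ∫ θ in b..(π/2), g θ := by
    apply integral_nonneg hb_pi2
    intro u hu
    exact hg_nonneg u ⟨by linarith only [hu.1, hab, ha_pos], hu.2⟩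
  have h2N : 0 ≤ 1 - 2/N := by
    rw [sub_nonneg, div_le_one hNpos]; linarith only [hNbig]
  have hNdiv : (4:ℝ)/N = 2*(2/N) := by ring
  -- main positive chunk on [a,b]
  have hI2 : a * ((1/(5*N)) * (1-2/N)^m) ≤ ∫ θ in a..b, g θ := by
    have hptwise : ∀ θ ∈ Set.Icc a b, (1/(5*N)) * (1-2/N)^m ≤ g θ := by
      intro θ hθ
      have hθa : a ≤ θ := hθ.1
      have hθb : θ ≤ b := hθ.2
      have hθpos : 0 < θ := lt_of_lt_of_le ha_pos hθa
      have hcos_ub : cos θ ≤ 1 - 2/π^2 * θ^2 := by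
        apply Real.cos_le_one_sub_mul_cos_sq
        rw [abs_of_nonneg hθpos.le]
        linarith only [hθb, hb_half, pi_gt_three]
      have hπ2 : (0:ℝ) < π^2 := by positivity
      have hπ10 : π^2 < 10 := by
        have h := mul_lt_mul' hpi1.le hpi1 pi_pos.le (by norm_num)
        rw [sq]; nlinarith [h]
      have hθ2 : 1/N ≤ θ^2 := by
        have h := pow_le_pow_left₀ ha_pos.le hθa 2
        rw [hasq] at h; exact h
      have h1c : 1/(5*N) ≤ 1 - cos θ := by
        have h5 : (1:ℝ)/5 ≤ 2/π^2 := by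
          rw [div_le_div_iff₀ (by norm_num) hπ2]
          linarith only [hπ10]
        have c1 : (1/5)*(1/N) ≤ (1/5)*θ^2 := mul_le_mul_of_nonneg_left hθ2 (by norm_num)
        have c2 : (1/5)*θ^2 ≤ (2/π^2)*θ^2 := mul_le_mul_of_nonneg_right h5 (sq_nonneg θ)
        have c3 : (1:ℝ)/(5*N) = (1/5)*(1/N) := by ring
        linarith only [c1, c2, c3, hcos_ub]
      have hθb2 : θ^2 ≤ 4/N := by
        have h := pow_le_pow_left₀ hθpos.le hθb 2
        rw [hbsq] at h; exact h
      have hcos_lb : 1 - 2/N ≤ cos θ := by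
        have hlow := Real.one_sub_sq_div_two_le_cos (x := θ)
        linarith only [hlow, hθb2, hNdiv]
      have hgpow : (1-2/N)^m ≤ (t + (1-t)*cos θ)^m := by
        apply pow_le_pow_left₀ h2N
        have hcc : 0 ≤ t * (1 - cos θ) :=
          mul_nonneg htpos.le (by linarith only [Real.cos_le_one θ])
        have hid : t + (1-t)*cos θ = cos θ + t*(1 - cos θ) := by ring
        linarith only [hcc, hid, hcos_lb]
      rw [hgval]
      have hp0 : (0:ℝ) ≤ (1-2/N)^m := pow_nonneg h2N m
      exact mul_le_mul h1c hgpow hp0 (by linarith only [Real.cos_le_one θ])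
    have hmono := integral_mono_on (μ := MeasureTheory.volume)
      (f := fun _ => (1/(5*N)) * (1-2/N)^m) (g := g) hab
      intervalIntegrable_const (hint a b) hptwise
    rw [integral_const, smul_eq_mul, hba] at hmono
    exact hmono
  -- negative chunk on [π/2, π]
  have h12t : (0:ℝ) ≤ 1 - 2*t := by linarith only [ht13]
  have hI4 : -(π * (1-2*t)^m) ≤ ∫ θ in (π/2)..π, g θ := by
    have hptwise : ∀ θ ∈ Set.Icc (π/2) π, -(2 * (1-2*t)^m) ≤ g θ := by
      intro θ hθ
      have hc0 : cos θ ≤ 0 :=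
        Real.cos_nonpos_of_pi_div_two_le_of_le hθ.1 (by linarith only [hθ.2, pi_pos])
      have hc1 : -1 ≤ cos θ := Real.neg_one_le_cos θ
      have h1t : (0:ℝ) ≤ 1 - t := by linarith only [ht13]
      have habs : |t + (1-t)*cos θ| ≤ 1 - 2*t := by
        rw [abs_le]
        constructor
        · have u2 := mul_le_mul_of_nonneg_left hc1 h1t
          linarith only [u2, htpos]
        · have u1 := mul_nonpos_of_nonneg_of_nonpos h1t hc0
          linarith only [u1, ht13]
      have hpow : -((1-2*t)^m) ≤ (t + (1-t)*cos θ)^m := by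
        have h1 : |(t + (1-t)*cos θ)^m| ≤ (1-2*t)^m := by
          rw [abs_pow]
          exact pow_le_pow_left₀ (abs_nonneg _) habs m
        linarith only [h1, neg_abs_le ((t + (1-t)*cos θ)^m)]
      rw [hgval]
      have hp0 : (0:ℝ) ≤ (1-2*t)^m := pow_nonneg h12t m
      have hint1 : 0 ≤ (1 - cos θ) * ((t + (1-t)*cos θ)^m + (1-2*t)^m) :=
        mul_nonneg (by linarith only [hc0]) (by linarith only [hpow])
      have hint2 : (1 - cos θ) * (1-2*t)^m ≤ 2 * (1-2*t)^m :=
        mul_le_mul_of_nonneg_right (by linarith only [hc1]) hp0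
      nlinarith [hint1, hint2]
    have hmono := integral_mono_on (μ := MeasureTheory.volume)
      (f := fun _ => -(2 * (1-2*t)^m)) (g := g) (by linarith only [pi_pos])
      intervalIntegrable_const (hint (π/2) π) hptwise
    rw [integral_const, smul_eq_mul] at hmono
    refine le_trans (le_of_eq ?_) hmono
    ring
  -- key numeric inequality
  have hkey : π * (1-2*t)^m < a * ((1/(5*N)) * (1-2/N)^m) := by
    have hP1 : (1:ℝ)/55 ≤ (1-2/N)^m := by
      have he1 : exp (-(2*(2/N))) ≤ 1 - 2/N :=
        exp_neg_two_mul_le (by positivity)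
          (by rw [div_le_div_iff₀ hNpos (by norm_num)]; linarith only [hNbig])
      have he1' : exp (-(4/N)) ≤ 1 - 2/N := by
        convert he1 using 2; ring
      have he2 : exp (-(4/N))^m ≤ (1-2/N)^m :=
        pow_le_pow_left₀ (exp_pos _).le he1' m
      have he3 : exp (-(4/N))^m = exp ((m:ℝ) * (-(4/N))) := by
        rw [← Real.exp_nat_mul]
      have he4 : exp (-4 : ℝ) ≤ exp ((m:ℝ) * (-(4/N))) := by
        apply Real.exp_le_exp.mpr
        have h4N : (N-1)*(4/N) = 4 - 4/N := by field_simp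
        have h4N0 : (0:ℝ) ≤ 4/N := by positivity
        have hexp2 : (m:ℝ) * (-(4/N)) = -((N-1)*(4/N)) := by rw [hmN]; ring
        rw [hexp2, h4N]; linarith only [h4N0]
      have he5 : (1:ℝ)/55 ≤ exp (-4:ℝ) := by
        have h4 : exp (4:ℝ) = exp 1 ^ 4 := by
          rw [← Real.exp_nat_mul]; norm_num
        have h55 : exp (4:ℝ) ≤ 55 := by
          rw [h4]
          have hp := pow_le_pow_left₀ (Real.exp_pos 1).le Real.exp_one_lt_d9.le 4
          calc exp 1^4 ≤ 2.7182818286^4 := hp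
            _ ≤ 55 := by norm_num
        calc (1:ℝ)/55 ≤ 1/exp (4:ℝ) := one_div_le_one_div_of_le (exp_pos _) h55
          _ = exp (-4:ℝ) := by rw [Real.exp_neg, inv_eq_one_div]
      calc (1:ℝ)/55 ≤ exp (-4:ℝ) := he5
        _ ≤ exp ((m:ℝ) * (-(4/N))) := he4
        _ = exp (-(4/N))^m := he3.symm
        _ ≤ (1-2/N)^m := he2
    have hP2 : (1-2*t)^m ≤ exp (-(Real.sqrt N/3)) := by
      have he1 : 1 - 2*t ≤ exp (-(2*t)) := by
        have := Real.add_one_le_exp (-(2*t)); linarith only [this]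
      have he2 : (1-2*t)^m ≤ exp (-(2*t))^m :=
        pow_le_pow_left₀ h12t he1 m
      have he3 : exp (-(2*t))^m = exp ((m:ℝ) * (-(2*t))) := by
        rw [← Real.exp_nat_mul]
      have he4 : exp ((m:ℝ)*(-(2*t))) ≤ exp (-(Real.sqrt N/3)) := by
        apply Real.exp_le_exp.mpr
        have hm2 : N/2 ≤ (m:ℝ) := by rw [hmN]; linarith only [hNbig]
        have step1 : (N/2) * (2 * (1/(3*Real.sqrt N))) ≤ (m:ℝ) * (2*t) := by
          apply mul_le_mul hm2 (by linarith only [ht_lb]) (by positivity)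
            (by linarith only [hm2, hNbig])
        have step2 : (N/2) * (2 * (1/(3*Real.sqrt N))) = (N / Real.sqrt N)/3 := by
          field_simp
        have step3 : N / Real.sqrt N = Real.sqrt N := Real.div_sqrt
        have hfin : Real.sqrt N/3 ≤ (m:ℝ) * (2*t) := by
          rw [step2, step3] at step1; exact step1
        have hneg : (m:ℝ)*(-(2*t)) = -((m:ℝ)*(2*t)) := by ring
        rw [hneg]; linarith only [hfin]
      calc (1-2*t)^m ≤ exp (-(2*t))^m := he2
        _ = exp ((m:ℝ) * (-(2*t))) := he3
        _ ≤ _ := he4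
    have hP3 : π * exp (-(Real.sqrt N/3)) < a * ((1/(5*N)) * ((1:ℝ)/55)) := by
      set x : ℝ := Real.sqrt N / 3 with hxdef
      have hx0 : 0 < x := by rw [hxdef]; positivity
      have hxbig : (10000000:ℝ) ≤ x := by rw [hxdef]; linarith only [hsN]
      have hsx : Real.sqrt N = 3*x := by rw [hxdef]; ring
      have hNx : N = 9*x^2 := by rw [← hNsq, hsx]; ring
      clear_value x
      have hq := exp_quart hx0.le
      have h1 : (1900800:ℝ)*π < x := by linarith only [hpi1, hxbig]
      have h2 : 7425*π*x^3 < x^4/256 := by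
        have hh := mul_lt_mul_of_pos_right h1 (pow_pos hx0 3)
        have hx4 : x*x^3 = x^4 := by ring
        linarith only [hh, hx4]
      have h3 : π * exp (-x) < 1/(7425*x^3) := by
        have hex : (0:ℝ) < exp x := exp_pos x
        have hrw : π * exp (-x) = π / exp x := by
          rw [Real.exp_neg]; ring
        rw [hrw, div_lt_div_iff₀ hex (by positivity)]
        calc π * (7425*x^3) = 7425*π*x^3 := by ring
          _ < x^4/256 := h2
          _ ≤ exp x := hq
          _ = 1 * exp x := by ring
      have h4 : a * ((1/(5*N)) * ((1:ℝ)/55)) = 1/(7425*x^3) := by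
        rw [hadef, hsx, hNx]
        rw [div_mul_div_comm, div_mul_div_comm]
        congr 1
        · ring
        · ring
      rw [h4]; exact h3
    have hchain1 : π * (1-2*t)^m ≤ π * exp (-(Real.sqrt N/3)) :=
      mul_le_mul_of_nonneg_left hP2 pi_pos.le
    have hchain2 : a * ((1/(5*N)) * ((1:ℝ)/55))
        ≤ a * ((1/(5*N)) * (1-2/N)^m) := by
      apply mul_le_mul_of_nonneg_left ?_ ha_pos.le
      apply mul_le_mul_of_nonneg_left hP1 (by positivity)
    linarith only [hchain1, hchain2, hP3]
  -- combine
  show (0:ℝ) < ∫ θ in (0:ℝ)..π, g θ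
  linarith only [E1, E2, E3, hI1, hI2, hI3, hI4, hkey]
end

section
/- For every integer n ≥ 3, one has α_n ≤ ξ_{n^#} ≤ √2/√(π(n−1)), where n^# = 2·⌊n/2⌋, ξ_{n^#} = 2^{−n^#}·C(n^#, n^#/2), and α_n is the unique fixed point of f_n in (0,1). -/
open Real Filter Finset

namespace Stmt11Aux

noncomputable def Q (k : ℕ) : ℝ := ∏ i ∈ Finset.range k, (2 * (i : ℝ) + 1) / (2 * i + 2)

lemma Q_pos (k : ℕ) : 0 < Q k := Finset.prod_pos fun i _ => by positivity

lemma Q_succ (k : ℕ) : Q (k + 1) = Q k * ((2 * (k : ℝ) + 1) / (2 * k + 2)) :=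
  Finset.prod_range_succ _ _

lemma Q_eq (k : ℕ) : Q k = ((2 * k).choose k : ℝ) / 4 ^ k := by
  induction k with
  | zero => simp [Q]
  | succ k ih =>
    have h' : (k + 1) * ((2 * (k + 1)).choose (k + 1)) = 2 * (2 * k + 1) * ((2 * k).choose k) := by
      simpa [Nat.centralBinom_eq_two_mul_choose] using Nat.succ_mul_centralBinom_succ k
    have h2 : ((k : ℝ) + 1) * ((2 * (k + 1)).choose (k + 1) : ℝ)
        = 2 * (2 * (k : ℝ) + 1) * ((2 * k).choose k : ℝ) := by exact_mod_cast h'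
    have hk1 : ((k:ℝ) + 1) ≠ 0 := by positivity
    have h3 : ((2 * (k + 1)).choose (k + 1) : ℝ)
        = 2 * (2 * (k : ℝ) + 1) * ((2 * k).choose k : ℝ) / ((k:ℝ) + 1) := by
      rw [eq_div_iff hk1]; linear_combination h2
    rw [Q_succ, ih, h3]
    have h4 : (4:ℝ) ^ (k+1) = 4 * 4 ^ k := by ring
    rw [h4]
    have h5 : (4:ℝ) ^ k ≠ 0 := by positivity
    field_simp
    ring

lemma Q_le_half {k : ℕ} (hk : 1 ≤ k) : Q k ≤ 1 / 2 := by
  induction k with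
  | zero => omega
  | succ k ih =>
    rcases Nat.eq_zero_or_pos k with h | h
    · subst h
      norm_num [Q, Finset.prod_range_one]
    · have h1 := ih h
      have h2 := Q_pos k
      have h3 : (2 * (k : ℝ) + 1) / (2 * k + 2) ≤ 1 := by
        rw [div_le_one (by positivity)]; linarith
      rw [Q_succ]
      nlinarith

lemma Q_sq_mul_W (k : ℕ) : Q k ^ 2 * (2 * (k : ℝ) + 1) * Real.Wallis.W k = 1 := by
  induction k with
  | zero => simp [Q, Real.Wallis.W]
  | succ k ih =>
    have h1 : (2 * (k:ℝ) + 1) ≠ 0 := by positivity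
    have h2 : (2 * (k:ℝ) + 2) ≠ 0 := by positivity
    have h3 : (2 * (k:ℝ) + 3) ≠ 0 := by positivity
    rw [Q_succ, Real.Wallis.W_succ]
    push_cast
    field_simp
    linear_combination (2*(k:ℝ)+3) * ih

lemma Q_sq_lower (k : ℕ) : 2 / (π * (2 * (k : ℝ) + 1)) ≤ Q k ^ 2 := by
  have hI := Q_sq_mul_W k
  have h2 := Real.Wallis.W_pos k
  have h3 := Real.Wallis.W_le k
  rw [div_le_iff₀ (by positivity)]
  nlinarith [mul_nonneg (mul_nonneg (sq_nonneg (Q k)) (by positivity : (0:ℝ) ≤ 2*(k:ℝ)+1))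
    (by linarith : (0:ℝ) ≤ π - 2 * Real.Wallis.W k)]

lemma Q_sq_upper (k : ℕ) : Q k ^ 2 ≤ 2 * (2 * (k : ℝ) + 2) / (π * (2 * (k : ℝ) + 1) ^ 2) := by
  have hI := Q_sq_mul_W k
  have h2 := Real.Wallis.W_pos k
  have h3 := Real.Wallis.le_W k
  have h3' : (2*(k:ℝ)+1) * π ≤ Real.Wallis.W k * (2*(2*(k:ℝ)+2)) := by
    rw [div_mul_eq_mul_div, div_le_iff₀ (by positivity)] at h3
    linarith
  rw [le_div_iff₀ (by positivity)]
  nlinarith [mul_le_mul_of_nonneg_left h3'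
    (by positivity : (0:ℝ) ≤ Q k ^ 2 * (2*(k:ℝ)+1))]


lemma intcos_pi_even (k : ℕ) : ∫ x in (0:ℝ)..π, cos x ^ (2 * k) = π * Q k := by
  induction k with
  | zero => norm_num [Q]
  | succ k ih =>
    have h : 2 * (k + 1) = 2 * k + 2 := by ring
    rw [h, integral_cos_pow, ih, Q_succ]
    simp only [Real.sin_pi, Real.sin_zero, mul_zero, sub_zero, zero_div, zero_add]
    push_cast
    ring

lemma intcos_2pi_even (k : ℕ) : ∫ x in (0:ℝ)..(2*π), cos x ^ (2 * k) = 2 * π * Q k := by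
  induction k with
  | zero => norm_num [Q]
  | succ k ih =>
    have h : 2 * (k + 1) = 2 * k + 2 := by ring
    rw [h, integral_cos_pow, ih, Q_succ]
    simp only [Real.sin_two_pi, Real.sin_zero, mul_zero, sub_zero, zero_div, zero_add]
    push_cast
    ring

lemma intcos_2pi_odd (k : ℕ) : ∫ x in (0:ℝ)..(2*π), cos x ^ (2 * k + 1) = 0 := by
  induction k with
  | zero => simp [integral_cos, Real.sin_two_pi]
  | succ k ih =>
    have h : 2 * (k + 1) + 1 = (2 * k + 1) + 2 := by ring
    rw [h, integral_cos_pow, ih]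
    simp [Real.sin_two_pi]

lemma int_plus (n : ℕ) : ∫ x in (0:ℝ)..(2*π), ((1 + cos x) / 2) ^ n = 2 * π * Q n := by
  have h : ∀ x : ℝ, ((1 + Real.cos x) / 2) ^ n = (fun y => Real.cos y ^ (2 * n)) (x / 2) := by
    intro x
    simp only
    rw [pow_mul, Real.cos_sq]
    have : 2 * (x / 2) = x := by ring
    rw [this]
    congr 1
    ring
  rw [intervalIntegral.integral_congr (fun x _ => h x)]
  rw [intervalIntegral.integral_comp_div (f := fun y => Real.cos y ^ (2 * n)) two_ne_zero]
  have h1 : (0:ℝ) / 2 = 0 := by norm_num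
  have h2 : (2 * π) / 2 = π := by ring
  rw [h1, h2, intcos_pi_even, smul_eq_mul]
  ring

lemma int_minus (n : ℕ) : ∫ x in (0:ℝ)..(2*π), ((1 - cos x) / 2) ^ n = 2 * π * Q n := by
  have h : ∀ x : ℝ, ((1 - Real.cos x) / 2) ^ n = (fun y => Real.sin y ^ (2 * n)) (x / 2) := by
    intro x
    simp only
    rw [pow_mul, Real.sin_sq_eq_half_sub]
    have : 2 * (x / 2) = x := by ring
    rw [this]
    congr 1
    ring
  rw [intervalIntegral.integral_congr (fun x _ => h x)]
  rw [intervalIntegral.integral_comp_div (f := fun y => Real.sin y ^ (2 * n)) two_ne_zero]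
  have h1 : (0:ℝ) / 2 = 0 := by norm_num
  have h2 : (2 * π) / 2 = π := by ring
  rw [h1, h2, integral_sin_pow_even, smul_eq_mul]
  show 2 * (π * Q n) = 2 * π * Q n
  ring




lemma f_eq (n : ℕ) (t : ℝ) :
    f n t = (2 * π)⁻¹ * ∫ x in (0:ℝ)..(2*π), (t + (1 - t) * Real.cos x) ^ n := by
  have key : (∫ x in (0:ℝ)..(2*π), (t + (1 - t) * Real.cos x) ^ n)
      = ∑ j ∈ Finset.range (n + 1),
        ((n.choose j : ℝ) * (1 - t) ^ j * t ^ (n - j)) * ∫ x in (0:ℝ)..(2*π), Real.cos x ^ j := by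
    have hexp : ∀ x : ℝ, (t + (1 - t) * Real.cos x) ^ n
        = ∑ j ∈ Finset.range (n + 1),
          ((n.choose j : ℝ) * (1 - t) ^ j * t ^ (n - j)) * Real.cos x ^ j := by
      intro x
      rw [add_comm, add_pow]
      refine Finset.sum_congr rfl fun j hj => ?_
      rw [mul_pow]
      ring
    rw [intervalIntegral.integral_congr (fun x _ => hexp x)]
    rw [intervalIntegral.integral_finset_sum]
    · exact Finset.sum_congr rfl fun j _ => intervalIntegral.integral_const_mul _ _
    · intro j _
      exact (Continuous.intervalIntegrable (by fun_prop) _ _)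
  rw [key]
  set G : ℕ → ℝ := fun j =>
    ((n.choose j : ℝ) * (1 - t) ^ j * t ^ (n - j)) * ∫ x in (0:ℝ)..(2*π), Real.cos x ^ j with hG
  have hre : ∑ j ∈ Finset.range (n + 1), G j = ∑ k ∈ Finset.range (n / 2 + 1), G (2 * k) := by
    have hinj : ∀ x ∈ Finset.range (n / 2 + 1), ∀ y ∈ Finset.range (n / 2 + 1),
        2 * x = 2 * y → x = y := by intro x _ y _ h; omega
    rw [← Finset.sum_image (f := G) (g := fun k => 2 * k) hinj]
    refine (Finset.sum_subset ?_ ?_).symm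
    · intro j hj
      simp only [Finset.mem_image, Finset.mem_range] at hj ⊢
      obtain ⟨k, hk, rfl⟩ := hj
      omega
    · intro j hjr hjim
      simp only [Finset.mem_image, Finset.mem_range] at hjr hjim
      have hodd : ∃ k, j = 2 * k + 1 := by
        rcases Nat.even_or_odd j with he | ho
        · exfalso
          obtain ⟨c, hc⟩ := he
          exact hjim ⟨c, by omega, by omega⟩
        · obtain ⟨c, hc⟩ := ho
          exact ⟨c, by omega⟩
      obtain ⟨k, rfl⟩ := hodd
      rw [hG]
      simp only
      rw [intcos_2pi_odd]
      ring
  rw [hre]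
  unfold f
  rw [Finset.mul_sum]
  refine Finset.sum_congr rfl fun k hk => ?_
  rw [hG]
  simp only
  rw [intcos_2pi_even, Q_eq]
  have h2 : ((1 - t) / 2) ^ (2 * k) = (1 - t) ^ (2 * k) / 4 ^ k := by
    rw [div_pow]
    congr 1
    rw [pow_mul]
    norm_num
  rw [h2]
  have hπ : π ≠ 0 := pi_ne_zero
  have h4 : (4:ℝ) ^ k ≠ 0 := by positivity
  field_simp



lemma pointwise (n : ℕ) {t c : ℝ} (h0 : 0 ≤ t) (h2 : t ≤ 1/2) (hc1 : -1 ≤ c) (hc2 : c ≤ 1) :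
    (t + (1 - t) * c) ^ n ≤ ((1 + c) / 2) ^ n + ((1 - 2*t) * ((1 - c) / 2)) ^ n := by
  have hb2 : (0:ℝ) ≤ (1 - 2*t) * ((1 - c) / 2) := by nlinarith
  rcases le_or_gt 0 (t + (1 - t) * c) with hx | hx
  · have h1 : t + (1 - t) * c ≤ (1 + c) / 2 := by nlinarith
    have h3 := pow_le_pow_left₀ hx h1 n
    have h4 : (0:ℝ) ≤ ((1 - 2*t) * ((1 - c) / 2)) ^ n := pow_nonneg hb2 n
    linarith
  · have habs : (t + (1 - t) * c) ^ n ≤ |t + (1 - t) * c| ^ n := by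
      rw [← abs_pow]; exact le_abs_self _
    have h3 : |t + (1 - t) * c| ≤ (1 - 2*t) * ((1 - c) / 2) := by
      rw [abs_of_neg hx]; nlinarith
    have h4 := pow_le_pow_left₀ (abs_nonneg _) h3 n
    have h5 : (0:ℝ) ≤ ((1 + c) / 2) ^ n := pow_nonneg (by linarith) n
    linarith

lemma f_le (n : ℕ) {t : ℝ} (h0 : 0 ≤ t) (h2 : t ≤ 1/2) :
    f n t ≤ Q n * (1 + (1 - 2*t) ^ n) := by
  rw [f_eq]
  have hint : (∫ x in (0:ℝ)..(2*π), (t + (1 - t) * Real.cos x) ^ n)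
      ≤ ∫ x in (0:ℝ)..(2*π),
          (((1 + Real.cos x) / 2) ^ n + ((1 - 2*t) * ((1 - Real.cos x) / 2)) ^ n) := by
    apply intervalIntegral.integral_mono_on (by positivity)
    · exact (Continuous.intervalIntegrable (by fun_prop) _ _)
    · exact (Continuous.intervalIntegrable (by fun_prop) _ _)
    · intro x _
      exact pointwise n h0 h2 (Real.neg_one_le_cos x) (Real.cos_le_one x)
  have hval : (∫ x in (0:ℝ)..(2*π),
      (((1 + Real.cos x) / 2) ^ n + ((1 - 2*t) * ((1 - Real.cos x) / 2)) ^ n))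
      = 2 * π * Q n + (1 - 2*t) ^ n * (2 * π * Q n) := by
    rw [intervalIntegral.integral_add
      (Continuous.intervalIntegrable (by fun_prop) _ _)
      (Continuous.intervalIntegrable (by fun_prop) _ _)]
    rw [int_plus]
    have h : ∀ x : ℝ, ((1 - 2*t) * ((1 - Real.cos x) / 2)) ^ n
        = (1 - 2*t) ^ n * ((1 - Real.cos x) / 2) ^ n := fun x => mul_pow _ _ _
    rw [intervalIntegral.integral_congr (fun x _ => h x)]
    rw [intervalIntegral.integral_const_mul, int_minus]
  have hπ : (0:ℝ) < π := pi_pos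
  calc (2 * π)⁻¹ * ∫ x in (0:ℝ)..(2*π), (t + (1 - t) * Real.cos x) ^ n
      ≤ (2 * π)⁻¹ * (2 * π * Q n + (1 - 2*t) ^ n * (2 * π * Q n)) := by
        rw [← hval]
        exact mul_le_mul_of_nonneg_left hint (by positivity)
    _ = Q n * (1 + (1 - 2*t) ^ n) := by
        field_simp

lemma bern2 (x : ℝ) (hx : 0 ≤ x) (n : ℕ) :
    1 + n * x + ((n : ℝ) * ((n : ℝ) - 1) / 2) * x ^ 2 ≤ (1 + x) ^ n := by
  induction n with
  | zero => norm_num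
  | succ n ih =>
    have hc : (0:ℝ) ≤ (n : ℝ) * ((n : ℝ) - 1) / 2 := by
      rcases Nat.eq_zero_or_pos n with h | h
      · simp [h]
      · have h1 : (1:ℝ) ≤ (n : ℝ) := by exact_mod_cast h
        nlinarith
    have h1 : (0:ℝ) ≤ 1 + x := by linarith
    have hstep : 1 + ((n:ℝ) + 1) * x + (((n:ℝ) + 1) * (((n:ℝ) + 1) - 1) / 2) * x ^ 2
        ≤ (1 + (n:ℝ) * x + ((n:ℝ) * ((n:ℝ) - 1) / 2) * x ^ 2) * (1 + x) := by
      have hx3 : (0:ℝ) ≤ x ^ 3 := by positivity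
      nlinarith [mul_nonneg hc hx3]
    calc 1 + (↑(n + 1) : ℝ) * x + ((↑(n + 1) : ℝ) * ((↑(n + 1) : ℝ) - 1) / 2) * x ^ 2
        = 1 + ((n:ℝ) + 1) * x + (((n:ℝ) + 1) * (((n:ℝ) + 1) - 1) / 2) * x ^ 2 := by push_cast; ring
      _ ≤ (1 + (n:ℝ) * x + ((n:ℝ) * ((n:ℝ) - 1) / 2) * x ^ 2) * (1 + x) := hstep
      _ ≤ (1 + x) ^ n * (1 + x) := mul_le_mul_of_nonneg_right ih h1
      _ = (1 + x) ^ (n + 1) := by ring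



lemma Q_sq_le_inv {k : ℕ} (hk : 1 ≤ k) : Q k ^ 2 ≤ 1 / (π * k) := by
  have h := Q_sq_upper k
  have hk1 : (1:ℝ) ≤ (k:ℝ) := by exact_mod_cast hk
  refine h.trans ?_
  rw [div_le_div_iff₀ (by positivity) (by positivity)]
  nlinarith [pi_pos]


end Stmt11Aux

open Stmt11Aux

set_option maxHeartbeats 1000000 in
theorem stmt_11 (n : ℕ) (hn : 3 ≤ n) (α : ℝ)
    (hα : α ∈ Set.Ioo (0 : ℝ) 1) (hfix : f n α = α)
    (huniq : ∀ t ∈ Set.Ioo (0 : ℝ) 1, f n t = t → t = α) :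
    α ≤ ((2 * (n / 2)).choose (n / 2) : ℝ) / 2 ^ (2 * (n / 2)) ∧
      ((2 * (n / 2)).choose (n / 2) : ℝ) / 2 ^ (2 * (n / 2))
        ≤ Real.sqrt 2 / Real.sqrt (π * (n - 1)) := by
  have hn3 : (3:ℝ) ≤ (n:ℝ) := by exact_mod_cast hn
  have hnpos : (0:ℝ) < (n:ℝ) := by linarith
  set m := n / 2 with hm
  have hm1 : 1 ≤ m := by omega
  have hmn : 2 * m ≤ n := by omega
  have hmn' : n ≤ 2 * m + 1 := by omega
  set ξ := Q m with hξdef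
  have hξpos : 0 < ξ := Q_pos m
  have hξhalf : ξ ≤ 1/2 := Q_le_half hm1
  have hgoal : ((2 * (n / 2)).choose (n / 2) : ℝ) / 2 ^ (2 * (n / 2)) = ξ := by
    rw [← hm, hξdef, Q_eq]
    congr 1
    rw [pow_mul]
    norm_num
  have hcast : 2 * (m:ℝ) + 1 ≤ (n:ℝ) + 1 := by
    have h := (Nat.cast_le (α := ℝ)).mpr hmn
    push_cast at h
    linarith
  have hξsq : 2 / (π * ((n:ℝ) + 1)) ≤ ξ ^ 2 := by
    refine le_trans ?_ (Q_sq_lower m)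
    apply div_le_div_of_nonneg_left (by norm_num) (by positivity)
    nlinarith [pi_pos]
  have hπpos := pi_pos
  have hπlt : π < 3.15 := pi_lt_d2
  have hnξsq : (81:ℝ)/64 ≤ ((n:ℝ) * ξ) ^ 2 := by
    have h3 : (n:ℝ)^2 * (2 / (π * ((n:ℝ) + 1))) ≤ (n:ℝ)^2 * ξ^2 :=
      mul_le_mul_of_nonneg_left hξsq (by positivity)
    have h4 : (81:ℝ)/64 ≤ (n:ℝ)^2 * (2 / (π * ((n:ℝ) + 1))) := by
      rw [mul_div_assoc', div_le_div_iff₀ (by norm_num) (by positivity)]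
      nlinarith
    calc (81:ℝ)/64 ≤ (n:ℝ)^2 * (2 / (π * ((n:ℝ) + 1))) := h4
      _ ≤ (n:ℝ)^2 * ξ^2 := h3
      _ = ((n:ℝ) * ξ)^2 := by ring
  have hnξ : 9/8 ≤ (n:ℝ) * ξ := by
    nlinarith [mul_nonneg hnpos.le hξpos.le]
  have hQn_pos := Q_pos n
  have hQn_sq : Q n ^ 2 ≤ 1 / (π * n) := Q_sq_le_inv (by omega)
  have hp1 : (79:ℝ)/16 ≤ (1 + 2*ξ) ^ n := by
    have hb := bern2 (2*ξ) (by positivity) n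
    have e2 : (27:ℝ)/16 ≤ ((n:ℝ) * ((n:ℝ) - 1) / 2) * (2*ξ)^2 := by
      have h5 : ((n:ℝ) * ((n:ℝ) - 1) / 2) * (2*ξ)^2 = 2 * ((n:ℝ)*ξ)^2 * (((n:ℝ) - 1)/(n:ℝ)) := by
        field_simp
      rw [h5]
      have h6 : (2:ℝ)/3 ≤ ((n:ℝ) - 1)/(n:ℝ) := by
        rw [div_le_div_iff₀ (by norm_num) hnpos]
        linarith
      nlinarith
    linarith
  have hp2 : (1 - 2*ξ) ^ n ≤ 16/79 := by
    have hA : (0:ℝ) ≤ (1 - 2*ξ) ^ n := pow_nonneg (by linarith) n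
    have hAB : (1 - 2*ξ) ^ n * (1 + 2*ξ) ^ n ≤ 1 := by
      rw [← mul_pow]
      have hb1 : (0:ℝ) ≤ (1 - 2*ξ) * (1 + 2*ξ) := by nlinarith
      have hb2 : (1 - 2*ξ) * (1 + 2*ξ) ≤ 1 := by nlinarith
      exact pow_le_one₀ hb1 hb2
    nlinarith
  have hfξ : f n ξ ≤ ξ := by
    have h1 := f_le n hξpos.le hξhalf
    have h2 : Q n * (1 + (1 - 2*ξ) ^ n) ≤ Q n * (95/79) :=
      mul_le_mul_of_nonneg_left (by linarith) hQn_pos.le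
    have h3 : Q n * (95/79) ≤ ξ := by
      have hsq : (Q n * (95/79))^2 ≤ ξ^2 := by
        have h5 : (Q n * (95/79))^2 = Q n ^ 2 * (9025/6241) := by ring
        have h6 : Q n ^ 2 * (9025/6241) ≤ (1 / (π * n)) * (9025/6241) :=
          mul_le_mul_of_nonneg_right hQn_sq (by norm_num)
        have h7 : (1 / (π * (n:ℝ))) * (9025/6241) ≤ 2 / (π * ((n:ℝ) + 1)) := by
          rw [div_mul_eq_mul_div, div_le_div_iff₀ (by positivity) (by positivity)]
          nlinarith
        rw [h5]
        exact h6.trans (h7.trans hξsq)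
      nlinarith [hQn_pos, hξpos]
    linarith
  -- lower fixed point at t₀
  set t₀ : ℝ := 1 / (3 * (n:ℝ)^2) with ht₀def
  have ht₀pos : 0 < t₀ := by rw [ht₀def]; positivity
  have hnt₀ : (n:ℝ) * t₀ ≤ 1/9 := by
    rw [ht₀def, mul_div_assoc', div_le_div_iff₀ (by positivity) (by norm_num)]
    nlinarith
  have ht₀small : t₀ ≤ 1/27 := by
    rw [ht₀def, div_le_div_iff₀ (by positivity) (by norm_num)]
    nlinarith
  have ht₀ξ : t₀ ≤ ξ := by
    rw [ht₀def, div_le_iff₀ (by positivity)]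
    nlinarith [mul_le_mul_of_nonneg_left hnξ (by linarith : (0:ℝ) ≤ 3 * (n:ℝ))]
  have ht₀f : t₀ ≤ f n t₀ := by
    have hterm : (n.choose (2*m) : ℝ) * ((2*m).choose m : ℝ) * ((1 - t₀)/2)^(2*m) * t₀^(n - 2*m)
        ≤ f n t₀ := by
      unfold f
      refine Finset.single_le_sum (f := fun k =>
          (n.choose (2*k) : ℝ) * ((2*k).choose k : ℝ) * ((1 - t₀)/2)^(2*k) * t₀^(n - 2*k))
        (fun i _ => ?_) (Finset.mem_range.mpr (show m < n/2 + 1 by omega))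
      have h1t : (0:ℝ) ≤ (1 - t₀)/2 := by linarith
      exact mul_nonneg (mul_nonneg (mul_nonneg (by positivity) (by positivity))
        (pow_nonneg h1t _)) (pow_nonneg ht₀pos.le _)
    have hb : (8:ℝ)/9 ≤ (1 - t₀)^(2*m) := by
      have hber := one_add_mul_le_pow (a := -t₀) (by linarith) (2*m)
      have h2mt : 2*(m:ℝ) * t₀ ≤ 1/9 := by
        have hc : 2*(m:ℝ) ≤ (n:ℝ) := by exact_mod_cast hmn
        nlinarith
      have h9 : (1:ℝ) + -t₀ = 1 - t₀ := by ring
      rw [h9] at hber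
      push_cast at hber
      linarith
    have hsplit : ((2*m).choose m : ℝ) * ((1 - t₀)/2)^(2*m) = ξ * (1 - t₀)^(2*m) := by
      rw [hξdef, Q_eq, div_pow]
      have h2 : (2:ℝ)^(2*m) = 4^m := by rw [pow_mul]; norm_num
      rw [h2]
      have h4 : (4:ℝ)^m ≠ 0 := by positivity
      field_simp
      try ring
    rcases (by omega : n = 2*m ∨ n = 2*m + 1) with he | ho
    · have hc1 : (n.choose (2*m) : ℝ) = 1 := by
        rw [he]; simp
      have hexp : n - 2*m = 0 := by omega
      have hterm' : ξ * (1 - t₀)^(2*m) ≤ f n t₀ := by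
        refine le_trans (le_of_eq ?_) hterm
        rw [hc1, hexp, pow_zero]
        linear_combination -hsplit
      have h1 : ξ * (8/9) ≤ ξ * (1 - t₀)^(2*m) := mul_le_mul_of_nonneg_left hb hξpos.le
      have h2 : t₀ ≤ ξ * (8/9) := by
        rw [ht₀def, div_le_iff₀ (by positivity)]
        nlinarith [mul_le_mul_of_nonneg_left hnξ (by linarith : (0:ℝ) ≤ (8/3) * (n:ℝ))]
      linarith
    · have hc1 : (n.choose (2*m) : ℝ) = (n:ℝ) := by
        rw [ho, Nat.choose_succ_self_right]
      have hexp : n - 2*m = 1 := by omega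
      have hterm' : (n:ℝ) * (ξ * (1 - t₀)^(2*m)) * t₀ ≤ f n t₀ := by
        refine le_trans (le_of_eq ?_) hterm
        rw [hc1, hexp, pow_one]
        linear_combination (-(n:ℝ)*t₀) * hsplit
      have h1 : 1 * t₀ ≤ (n:ℝ) * (ξ * (1 - t₀)^(2*m)) * t₀ := by
        apply mul_le_mul_of_nonneg_right _ ht₀pos.le
        calc (1:ℝ) = (9/8) * (8/9) := by norm_num
          _ ≤ ((n:ℝ) * ξ) * (1 - t₀)^(2*m) := by
              apply mul_le_mul hnξ hb (by norm_num) (by nlinarith)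
          _ = (n:ℝ) * (ξ * (1 - t₀)^(2*m)) := by ring
      calc t₀ = 1 * t₀ := by ring
        _ ≤ (n:ℝ) * (ξ * (1 - t₀)^(2*m)) * t₀ := h1
        _ ≤ f n t₀ := hterm'
  have hcont : Continuous (f n) := by
    unfold f
    exact continuous_finset_sum _ (fun i _ => by fun_prop)
  have hIVT := intermediate_value_Icc' ht₀ξ ((hcont.sub continuous_id).continuousOn)
  have h0mem : (0:ℝ) ∈ Set.Icc (f n ξ - ξ) (f n t₀ - t₀) := ⟨by linarith, by linarith⟩
  obtain ⟨t₁, ht₁mem, ht₁⟩ := hIVT h0mem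
  have hfix1 : f n t₁ = t₁ := by
    have h : f n t₁ - t₁ = 0 := ht₁
    linarith
  have ht₁Ioo : t₁ ∈ Set.Ioo (0:ℝ) 1 :=
    ⟨lt_of_lt_of_le ht₀pos ht₁mem.1, lt_of_le_of_lt (ht₁mem.2.trans hξhalf) (by norm_num)⟩
  have hαt : t₁ = α := huniq t₁ ht₁Ioo hfix1
  constructor
  · rw [hgoal]
    calc α = t₁ := hαt.symm
      _ ≤ ξ := ht₁mem.2
  · rw [hgoal]
    have hn1 : (0:ℝ) < (n:ℝ) - 1 := by linarith
    have hsq2 : ξ ^ 2 ≤ 2 / (π * ((n:ℝ) - 1)) := by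
      refine (Q_sq_le_inv hm1).trans ?_
      rw [div_le_div_iff₀ (by positivity) (by positivity)]
      have hc : (n:ℝ) - 1 ≤ 2 * (m:ℝ) := by
        have h := (Nat.cast_le (α := ℝ)).mpr hmn'
        push_cast at h
        linarith
      nlinarith
    have hrw : Real.sqrt 2 / Real.sqrt (π * ((n:ℝ) - 1))
        = Real.sqrt (2 / (π * ((n:ℝ) - 1))) := (Real.sqrt_div (by norm_num) _).symm
    rw [hrw]
    exact (Real.le_sqrt hξpos.le (by positivity)).mpr hsq2
end

section
/- Let p ∈ (0,1) and define f(t) = ∑_{n≥2} p(1−p)^{n−2}·f_n(t) for t ∈ [0,1]. Then α := (−3p + √(p(p+8)))/(4(1−p)) lies in (0,1) and is the unique fixed point of f in (0,1): f(α) = α, and f(t) = t with t ∈ (0,1) implies t = α. -/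
open Real Filter Finset

/-- `fGW p t = ∑_{n≥2} p(1−p)^{n−2} f_n(t)`, the generating function for the
shifted geometric offspring distribution. -/
noncomputable def fGW (p t : ℝ) : ℝ := ∑' n : ℕ, p * (1 - p) ^ n * f (n + 2) t

noncomputable def u (n : ℕ) : ℝ := (Nat.centralBinom n : ℝ) / 4 ^ n

lemma u_zero : u 0 = 1 := by simp [u, Nat.centralBinom]

lemma u_nonneg (n : ℕ) : 0 ≤ u n :=
  div_nonneg (Nat.cast_nonneg _) (by positivity)

lemma u_rec (n : ℕ) : (2 * n + 2) * u (n + 1) = (2 * n + 1) * u n := by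
  have h' : ((n:ℝ) + 1) * (Nat.centralBinom (n+1) : ℝ) = 2 * (2 * n + 1) * Nat.centralBinom n := by
    exact_mod_cast congrArg (Nat.cast : ℕ → ℝ) (Nat.succ_mul_centralBinom_succ n)
  have h4 : (4:ℝ) ^ (n+1) = 4 * 4 ^ n := by ring
  rw [u, u, h4]
  field_simp
  linear_combination 2 * h'

lemma weighted_sum (m : ℕ) :
    ∑ i ∈ range (m + 1), (2 * (i:ℝ)) * (u i * u (m - i)) =
      (m : ℝ) * ∑ i ∈ range (m + 1), u i * u (m - i) := by
  have h := Finset.sum_range_reflect (fun i => (2 * (i:ℝ)) * (u i * u (m - i))) (m + 1)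
  have key : ∑ i ∈ range (m + 1), (2 * (i:ℝ)) * (u i * u (m - i))
      + ∑ i ∈ range (m + 1), (2 * (i:ℝ)) * (u i * u (m - i))
      = ∑ i ∈ range (m + 1), (2 * (m:ℝ)) * (u i * u (m - i)) := by
    nth_rewrite 2 [← h]
    rw [← Finset.sum_add_distrib]
    apply Finset.sum_congr rfl
    intro i hi
    simp only [Finset.mem_range] at hi
    have h1 : m + 1 - 1 - i = m - i := by omega
    have h2 : m - (m - i) = i := by omega
    rw [h1, h2]
    have h3 : ((m - i : ℕ) : ℝ) = (m : ℝ) - i := by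
      have : i ≤ m := by omega
      push_cast [this]; ring
    rw [h3, mul_comm (u (m - i)) (u i)]
    ring
  have h2 : ∑ i ∈ range (m + 1), (2 * (m:ℝ)) * (u i * u (m - i))
      = 2 * ((m:ℝ) * ∑ i ∈ range (m + 1), (u i * u (m - i))) := by
    rw [Finset.mul_sum, Finset.mul_sum]; apply Finset.sum_congr rfl; intros; ring
  rw [h2] at key
  linarith

lemma u_conv (n : ℕ) : ∑ i ∈ range (n + 1), u i * u (n - i) = 1 := by
  induction n with
  | zero => simp [u_zero]
  | succ n ih =>
    have hw := weighted_sum (n + 1)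
    have hshift : ∑ i ∈ range (n + 2), (2 * (i:ℝ)) * (u i * u (n + 1 - i))
        = ∑ j ∈ range (n + 1), (2 * (j:ℝ) + 2) * (u (j+1) * u (n - j)) := by
      rw [Finset.sum_range_succ'] -- splits off i = 0
      simp only [Nat.cast_zero]
      rw [show ∀ x:ℝ, x + 2 * 0 * (u 0 * u (n+1-0)) = x by intro x; ring]
      apply Finset.sum_congr rfl
      intro j hj
      simp only [Finset.mem_range] at hj
      have : n + 1 - (j + 1) = n - j := by omega
      rw [this]
      push_cast
      ring
    have hr : ∑ j ∈ range (n + 1), (2 * (j:ℝ) + 2) * (u (j+1) * u (n - j))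
        = ∑ j ∈ range (n + 1), (2 * (j:ℝ) + 1) * (u j * u (n - j)) := by
      apply Finset.sum_congr rfl
      intro j hj
      have := u_rec j
      calc (2 * (j:ℝ) + 2) * (u (j+1) * u (n - j)) = ((2*j+2) * u (j+1)) * u (n-j) := by ring
        _ = ((2*j+1) * u j) * u (n-j) := by rw [this]
        _ = (2 * (j:ℝ) + 1) * (u j * u (n - j)) := by ring
    have hsplit : ∑ j ∈ range (n + 1), (2 * (j:ℝ) + 1) * (u j * u (n - j))
        = (∑ j ∈ range (n + 1), (2 * (j:ℝ)) * (u j * u (n - j)))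
          + ∑ j ∈ range (n + 1), u j * u (n - j) := by
      rw [← Finset.sum_add_distrib]; apply Finset.sum_congr rfl; intros; ring
    have hw' := weighted_sum n
    rw [hshift, hr, hsplit, hw', ih] at hw
    push_cast at hw
    have : ((n:ℝ) + 1) ≠ 0 := by positivity
    field_simp at hw
    nlinarith [hw]

lemma u_le_one (n : ℕ) : u n ≤ 1 := by
  induction n with
  | zero => simp [u_zero]
  | succ n ih =>
    have h := u_rec n
    nlinarith [u_nonneg n, u_nonneg (n+1)]

lemma cb_eq (k : ℕ) (z : ℝ) : (Nat.centralBinom k : ℝ) * z ^ k = u k * (4 * z) ^ k := by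
  have : (4:ℝ)^k ≠ 0 := by positivity
  rw [u, mul_pow]
  field_simp

lemma summable_cb {z : ℝ} (h0 : 0 ≤ z) (h1 : z < 1/4) :
    Summable (fun k => (Nat.centralBinom k : ℝ) * z ^ k) := by
  apply Summable.of_nonneg_of_le (fun k => by positivity) (fun k => ?_)
    (summable_geometric_of_lt_one (by linarith) (by linarith : 4 * z < 1))
  rw [cb_eq]
  calc u k * (4*z)^k ≤ 1 * (4*z)^k := by
        apply mul_le_mul_of_nonneg_right (u_le_one k) (by positivity)
    _ = (4*z)^k := one_mul _

lemma hasSum_centralBinom {z : ℝ} (h0 : 0 ≤ z) (h1 : z < 1/4) :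
    HasSum (fun k => (Nat.centralBinom k : ℝ) * z ^ k) (1 / Real.sqrt (1 - 4 * z)) := by
  set g := fun k => (Nat.centralBinom k : ℝ) * z ^ k with hg_def
  have hg : Summable g := summable_cb h0 h1
  have hgn : Summable (fun k => ‖g k‖) := by
    have : ∀ k, ‖g k‖ = g k := fun k => Real.norm_of_nonneg (by positivity)
    simpa [this] using hg
  set S := ∑' k, g k with hS_def
  have hsq : S * S = 1 / (1 - 4 * z) := by
    rw [hS_def, tsum_mul_tsum_eq_tsum_sum_antidiagonal_of_summable_norm hgn hgn]
    have hterm : ∀ n : ℕ, ∑ kl ∈ Finset.HasAntidiagonal.antidiagonal n, g kl.1 * g kl.2 = (4 * z) ^ n := by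
      intro n
      rw [Finset.Nat.sum_antidiagonal_eq_sum_range_succ (fun k l => g k * g l)]
      have : ∀ i ∈ Finset.range (n+1), g i * g (n - i) = (4*z)^n * (u i * u (n - i)) := by
        intro i hi
        simp only [Finset.mem_range] at hi
        rw [hg_def]
        simp only
        rw [cb_eq, cb_eq]
        have : (4*z)^i * (4*z)^(n-i) = (4*z)^n := by
          rw [← pow_add]; congr 1; omega
        calc u i * (4*z)^i * (u (n-i) * (4*z)^(n-i))
            = ((4*z)^i * (4*z)^(n-i)) * (u i * u (n-i)) := by ring
          _ = (4*z)^n * (u i * u (n-i)) := by rw [this]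
      rw [Finset.sum_congr rfl this, ← Finset.mul_sum, u_conv, mul_one]
    rw [tsum_congr hterm, tsum_geometric_of_lt_one (by linarith) (by linarith), one_div]
  have hSpos : 0 < S := by
    have h0le : (1:ℝ) ≤ S := by
      have := Summable.le_tsum hg 0 (fun i _ => by positivity)
      simpa [hg_def, Nat.centralBinom, hS_def] using this
    linarith
  have h1z : 0 < 1 - 4 * z := by linarith
  have hS : S = 1 / Real.sqrt (1 - 4 * z) := by
    have : Real.sqrt (1 - 4*z) * S = 1 := by
      have h2 : (Real.sqrt (1 - 4*z) * S)^2 = 1 := by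
        rw [mul_pow, Real.sq_sqrt h1z.le]
        rw [pow_two, hsq]
        field_simp
      have hpos : 0 < Real.sqrt (1 - 4*z) * S :=
        mul_pos (Real.sqrt_pos.2 h1z) hSpos
      nlinarith [h2, hpos]
    field_simp at this ⊢
    linarith [this]
  have := hg.hasSum
  rwa [← hS_def, hS] at this

lemma cb_le_four_pow (k : ℕ) : ((2 * k).choose k : ℝ) ≤ 4 ^ k := by
  have h := u_le_one k
  have : (Nat.centralBinom k : ℝ) ≤ 4 ^ k := by
    have h4 : (0:ℝ) < 4 ^ k := by positivity
    rw [u] at h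
    calc (Nat.centralBinom k : ℝ) = (Nat.centralBinom k : ℝ) / 4^k * 4^k := by field_simp
      _ ≤ 1 * 4^k := by apply mul_le_mul_of_nonneg_right h h4.le
      _ = 4^k := one_mul _
  simpa [Nat.centralBinom] using this

lemma f_nonneg (m : ℕ) {t : ℝ} (h0 : 0 ≤ t) (h1 : t ≤ 1) : 0 ≤ f m t := by
  apply Finset.sum_nonneg
  intro k _
  have ha : (0:ℝ) ≤ (1 - t)/2 := by linarith
  positivity

lemma f_le_one (m : ℕ) {t : ℝ} (h0 : 0 ≤ t) (h1 : t ≤ 1) : f m t ≤ 1 := by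
  have ha : (0:ℝ) ≤ (1 - t)/2 := by linarith
  have step1 : f m t ≤ ∑ k ∈ Finset.range (m / 2 + 1),
      (m.choose (2*k) : ℝ) * (2*((1-t)/2)) ^ (2*k) * t ^ (m - 2*k) := by
    apply Finset.sum_le_sum
    intro k _
    have hcb := cb_le_four_pow k
    have h4 : (2*((1-t)/2):ℝ) ^ (2*k) = 4^k * ((1-t)/2)^(2*k) := by
      rw [mul_pow, pow_mul]; norm_num
    rw [h4]
    have hch : (0:ℝ) ≤ (m.choose (2*k) : ℝ) := Nat.cast_nonneg _
    have htp : (0:ℝ) ≤ t ^ (m - 2*k) := by positivity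
    have hap : (0:ℝ) ≤ ((1-t)/2) ^ (2*k) := by positivity
    calc (m.choose (2 * k) : ℝ) * ((2 * k).choose k : ℝ) * ((1 - t) / 2) ^ (2 * k) * t ^ (m - 2 * k)
        ≤ (m.choose (2 * k) : ℝ) * (4:ℝ)^k * ((1 - t) / 2) ^ (2 * k) * t ^ (m - 2 * k) := by
          apply mul_le_mul_of_nonneg_right _ htp
          apply mul_le_mul_of_nonneg_right _ hap
          exact mul_le_mul_of_nonneg_left hcb hch
      _ = (m.choose (2*k) : ℝ) * ((4:ℝ)^k * ((1-t)/2)^(2*k)) * t ^ (m - 2*k) := by ring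
  have step2 : ∑ k ∈ Finset.range (m / 2 + 1),
      (m.choose (2*k) : ℝ) * (2*((1-t)/2)) ^ (2*k) * t ^ (m - 2*k)
      ≤ ∑ j ∈ Finset.range (m + 1), (m.choose j : ℝ) * (2*((1-t)/2)) ^ j * t ^ (m - j) := by
    have himg : ∑ k ∈ Finset.range (m / 2 + 1),
        (m.choose (2*k) : ℝ) * (2*((1-t)/2)) ^ (2*k) * t ^ (m - 2*k)
        = ∑ j ∈ (Finset.range (m / 2 + 1)).image (fun k => 2*k),
          (m.choose j : ℝ) * (2*((1-t)/2)) ^ j * t ^ (m - j) := by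
      rw [Finset.sum_image]
      intro x _ y _ h
      simp only at h
      omega
    rw [himg]
    apply Finset.sum_le_sum_of_subset_of_nonneg
    · intro j hj
      simp only [Finset.mem_image, Finset.mem_range] at hj ⊢
      obtain ⟨k, hk, rfl⟩ := hj
      omega
    · intro j _ _
      have h2 : (0:ℝ) ≤ 2*((1-t)/2) := by linarith
      positivity
  have step3 : ∑ j ∈ Finset.range (m + 1), (m.choose j : ℝ) * (2*((1-t)/2)) ^ j * t ^ (m - j)
      = (2*((1-t)/2) + t) ^ m := by
    rw [add_pow]
    apply Finset.sum_congr rfl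
    intro j _
    ring
  have : (2*((1-t)/2) + t : ℝ) = 1 := by ring
  rw [this] at step3
  simp only [one_pow] at step3
  calc f m t ≤ _ := step1
    _ ≤ _ := step2
    _ = 1 := step3

lemma val_aux (P C A Q D : ℝ) (hQ : Q ≠ 0) (hD : D ≠ 0) (k : ℕ) :
    P * Q^(2*k) * C * A^(2*(k+1)) * (1/D^(2*(k+1)+1))
      = P/(Q^2*D) * (C * ((A*Q/D)^2)^(k+1)) := by
  rw [← pow_mul, div_pow, mul_pow]
  have hD1 : D^(2*(k+1)) ≠ 0 := pow_ne_zero _ hD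
  have hD2 : D^(2*(k+1)+1) ≠ 0 := pow_ne_zero _ hD
  have hQQ : Q^(2*(k+1)) = Q^2 * Q^(2*k) := by rw [← pow_add]; ring_nf
  have hDD : D^(2*(k+1)+1) = D^(2*(k+1)) * D := pow_succ _ _
  field_simp
  rw [hQQ, hDD]
  ring

lemma fGW_closed {p t : ℝ} (hp0 : 0 < p) (hp1 : p < 1) (ht0 : 0 < t) (ht1 : t < 1) :
    fGW p t = p / (1-p)^2 * (-((1-p)*t + 1) + 1 / Real.sqrt (p * (2 - p - 2*t*(1-p)))) := by
  have hq0 : (0:ℝ) < 1 - p := by linarith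
  set q : ℝ := 1 - p with hq_def
  have hq1 : q < 1 := by rw [hq_def]; linarith
  have hqt1 : q * t < 1 := by nlinarith
  have h1qt : (0:ℝ) < 1 - q * t := by linarith
  have ha0 : (0:ℝ) < (1 - t)/2 := by linarith
  have hkey : 2 * ((1-t)/2) * q < 1 - q * t := by rw [hq_def]; nlinarith
  set w : ℝ := ((1-t)/2 * q / (1 - q*t))^2 with hw_def
  have hw0 : 0 ≤ w := sq_nonneg _
  have hw1 : w < 1/4 := by
    have h : (1-t)/2 * q / (1 - q*t) < 1/2 := by
      rw [div_lt_iff₀ h1qt]; nlinarith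
    have h' : (0:ℝ) < (1-t)/2 * q / (1-q*t) := by positivity
    rw [hw_def]; nlinarith
  set F : ℕ → ℕ → ℝ := fun n k =>
    p * q ^ n * (((n+2).choose (2*k) : ℝ) * (((2*k).choose k : ℝ)) * ((1-t)/2) ^ (2*k)
      * t ^ (n+2-2*k)) with hF_def
  have hFnn : ∀ n k, 0 ≤ F n k := by
    intro n k
    rw [hF_def]
    have := ha0.le
    positivity
  have row : ∀ n, HasSum (F n) (p * q^n * f (n+2) t) := by
    intro n
    have hz : ∀ k ∉ Finset.range ((n+2)/2 + 1), F n k = 0 := by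
      intro k hk
      simp only [Finset.mem_range, not_lt] at hk
      have h2 : n + 2 < 2 * k := by omega
      rw [hF_def]
      simp [Nat.choose_eq_zero_of_lt h2]
    have h := hasSum_sum_of_ne_finset_zero (L := SummationFilter.unconditional ℕ) hz
    convert h using 1
    rw [f, Finset.mul_sum]
  have hrowsum : ∀ n, (∑' k, F n k) = p * q^n * f (n+2) t := fun n => (row n).tsum_eq
  have hFs : Summable (Function.uncurry F) := by
    refine (summable_prod_of_nonneg ?_).2 ⟨fun n => (row n).summable, ?_⟩
    · intro nk
      exact hFnn nk.1 nk.2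
    show Summable fun n => ∑' k, F n k
    refine Summable.of_nonneg_of_le ?_ ?_ ((summable_geometric_of_lt_one hq0.le hq1).mul_left p)
    · intro n
      rw [hrowsum n]
      have := f_nonneg (n+2) ht0.le ht1.le
      positivity
    · intro n
      rw [hrowsum n]
      have h1 := f_le_one (n+2) ht0.le ht1.le
      have h2 : (0:ℝ) ≤ p * q^n := by positivity
      nlinarith [pow_pos hq0 n]
  set S : ℕ → ℝ := fun k => if k = 0 then p*t^2/(1-q*t)
    else (p/(q^2*(1-q*t))) * ((Nat.centralBinom k : ℝ) * w^k) with hS_def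
  have col : ∀ k, HasSum (fun n => F n k) (S k) := by
    intro k
    match k with
    | 0 =>
      have h := (hasSum_geometric_of_lt_one (by positivity) hqt1).mul_left (p * t^2)
      have he : (fun n => F n 0) = fun n => p * t^2 * (q*t)^n := by
        funext n
        rw [hF_def]
        simp only [Nat.mul_zero, Nat.choose_zero_right, Nat.choose_self, Nat.sub_zero,
          Nat.cast_one, pow_zero]
        rw [mul_pow, pow_add]
        ring
      rw [hS_def]
      simp only [if_pos rfl]
      rw [he, div_eq_mul_inv]
      exact h
    | k + 1 =>
      have hnorm : ‖q*t‖ < 1 := by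
        rw [Real.norm_eq_abs, abs_of_nonneg (by positivity)]; exact hqt1
      have hshift : HasSum (fun m => F (m + 2*k) (k+1)) (S (k+1)) := by
        have h := (hasSum_choose_mul_geometric_of_norm_lt_one (2*(k+1)) hnorm).mul_left
          (p * q^(2*k) * (((2*(k+1)).choose (k+1)) : ℝ) * ((1-t)/2)^(2*(k+1)))
        convert h using 1
        · rfl
        · funext m
          simp only [hF_def]
          have e1 : m + 2*k + 2 - 2*(k+1) = m := by omega
          have e2 : m + 2*k + 2 = m + 2*(k+1) := by omega
          rw [e1, e2, pow_add, mul_pow]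
          ring
        · rw [hS_def]
          simp only [if_neg (Nat.succ_ne_zero k)]
          have hc : (Nat.centralBinom (k+1) : ℝ) = ((2*(k+1)).choose (k+1) : ℝ) := by
            rw [Nat.centralBinom]
          rw [hc, hw_def]
          exact (val_aux p (((2*(k+1)).choose (k+1) : ℝ)) ((1-t)/2) q (1-q*t)
            (ne_of_gt hq0) (ne_of_gt h1qt) k).symm
      have h0 : ∑ i ∈ Finset.range (2*k), F i (k+1) = 0 := by
        apply Finset.sum_eq_zero
        intro i hi
        simp only [Finset.mem_range] at hi
        have h2 : i + 2 < 2 * (k+1) := by omega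
        rw [hF_def]
        simp [Nat.choose_eq_zero_of_lt h2]
      apply (hasSum_nat_add_iff' (f := fun n => F n (k+1)) (2*k)).1
      rwa [h0, sub_zero]
  have hB := hasSum_centralBinom hw0 hw1
  have hshift1 : HasSum (fun k => (Nat.centralBinom (k+1):ℝ) * w^(k+1))
      (1/Real.sqrt (1-4*w) - 1) := by
    apply (hasSum_nat_add_iff (f := fun k => (Nat.centralBinom k : ℝ) * w^k) 1).2
    have hone : (1/Real.sqrt (1-4*w) - 1) + ∑ i ∈ Finset.range 1, (Nat.centralBinom i : ℝ) * w^i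
        = 1/Real.sqrt (1-4*w) := by
      simp [Nat.centralBinom]
    rw [hone]
    exact hB
  have hScol : HasSum (fun k => S (k+1))
      ((p/(q^2*(1-q*t))) * (1/Real.sqrt (1-4*w) - 1)) := by
    have h := hshift1.mul_left (p/(q^2*(1-q*t)))
    have he : (fun k => S (k+1))
        = fun k => p/(q^2*(1-q*t)) * ((Nat.centralBinom (k+1):ℝ) * w^(k+1)) := by
      funext k
      rw [hS_def]
      simp only [if_neg (Nat.succ_ne_zero k)]
    rw [he]
    exact h
  have hStot : HasSum S
      (p*t^2/(1-q*t) + (p/(q^2*(1-q*t))) * (1/Real.sqrt (1-4*w) - 1)) := by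
    apply (hasSum_nat_add_iff' (f := S) 1).1
    have h0 : ∑ i ∈ Finset.range 1, S i = p*t^2/(1-q*t) := by
      rw [Finset.sum_range_one, hS_def]
      simp
    rw [h0]
    convert hScol using 1
    rfl
    ring
  have hfgw : fGW p t
      = p*t^2/(1-q*t) + (p/(q^2*(1-q*t))) * (1/Real.sqrt (1-4*w) - 1) := by
    rw [fGW]
    calc ∑' n, p * q^n * f (n+2) t = ∑' n, ∑' k, F n k := by
          exact tsum_congr fun n => (hrowsum n).symm
      _ = ∑' k, ∑' n, F n k := (Summable.tsum_comm hFs).symm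
      _ = ∑' k, S k := tsum_congr fun k => (col k).tsum_eq
      _ = _ := hStot.tsum_eq
  -- now algebra
  have hs2pos : (0:ℝ) < 2 - p - 2*t*q := by rw [hq_def]; nlinarith
  have hargpos : (0:ℝ) < p * (2 - p - 2*t*q) := by positivity
  set s : ℝ := Real.sqrt (p * (2 - p - 2*t*q)) with hs_def
  have hs0 : 0 < s := Real.sqrt_pos.2 hargpos
  have hsq : s^2 = p * (2 - p - 2*t*q) := Real.sq_sqrt hargpos.le
  have h14w : Real.sqrt (1-4*w) = s/(1-q*t) := by
    have he : 1 - 4*w = (s/(1-q*t))^2 := by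
      rw [div_pow, hsq, hw_def, hq_def]
      have : (1 - t*(1-p)) ≠ 0 := by nlinarith
      field_simp
      ring
    rw [he, Real.sqrt_sq (by positivity)]
  rw [hfgw, h14w]
  have h1 : (1 - q*t) ≠ 0 := ne_of_gt h1qt
  have h2 : q ≠ 0 := ne_of_gt hq0
  have h3 : s ≠ 0 := ne_of_gt hs0
  have h1' : 1 - t*q ≠ 0 := by rw [mul_comm]; exact h1
  field_simp
  ring

theorem stmt_13 (p : ℝ) (hp : p ∈ Set.Ioo (0 : ℝ) 1) :
    (-3 * p + Real.sqrt (p * (p + 8))) / (4 * (1 - p)) ∈ Set.Ioo (0 : ℝ) 1 ∧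
    fGW p ((-3 * p + Real.sqrt (p * (p + 8))) / (4 * (1 - p)))
      = (-3 * p + Real.sqrt (p * (p + 8))) / (4 * (1 - p)) ∧
    ∀ t ∈ Set.Ioo (0 : ℝ) 1, fGW p t = t →
      t = (-3 * p + Real.sqrt (p * (p + 8))) / (4 * (1 - p)) := by
  obtain ⟨hp0, hp1⟩ := hp
  have hq0 : (0:ℝ) < 1 - p := by linarith
  set s0 : ℝ := Real.sqrt (p * (p + 8)) with hs0_def
  have hargnn : (0:ℝ) < p * (p + 8) := by nlinarith
  have hs0sq : s0^2 = p * (p + 8) := Real.sq_sqrt hargnn.le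
  have hs0pos : 0 < s0 := Real.sqrt_pos.2 hargnn
  have hgt : 3 * p < s0 := by
    have h1 : 0 < (s0 - 3*p) * (s0 + 3*p) := by nlinarith
    nlinarith
  have hlt : s0 < 4 - p := by
    have h1 : (0:ℝ) < (4 - p - s0) * (4 - p + s0) := by nlinarith
    nlinarith
  set α : ℝ := (-3 * p + s0) / (4 * (1 - p)) with hα_def
  have hα0 : 0 < α := by
    apply div_pos (by linarith) (by linarith)
  have hα1 : α < 1 := by
    rw [hα_def, div_lt_one (by linarith)]
    linarith
  have hmem : α ∈ Set.Ioo (0:ℝ) 1 := ⟨hα0, hα1⟩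
  refine ⟨hmem, ?_, ?_⟩
  · -- fixed point
    rw [fGW_closed hp0 hp1 hα0 hα1]
    have hAq : (1 - p) * α = (s0 - 3*p)/4 := by
      rw [hα_def]
      field_simp
      ring
    have harg : 2 - p - 2*α*(1-p) = (4 + p - s0)/2 := by
      have h := hAq
      have h2 : 2*α*(1-p) = 2*((1-p)*α) := by ring
      rw [h2, h]
      ring
    have hpoly : (4 + p - s0) * (p + s0)^2 = 32 * p := by
      linear_combination (4 - p - s0) * hs0sq
    have hs_eq : Real.sqrt (p * (2 - p - 2*α*(1-p))) = 4*p/(p+s0) := by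
      have h4 : p * (2 - p - 2*α*(1-p)) = (4*p/(p+s0))^2 := by
        rw [harg]
        have hne : p + s0 ≠ 0 := by positivity
        field_simp
        linear_combination hpoly
      rw [h4, Real.sqrt_sq (by positivity)]
    rw [hs_eq]
    rw [hα_def]
    have hne1 : (1:ℝ) - p ≠ 0 := ne_of_gt hq0
    have hne2 : p + s0 ≠ 0 := by positivity
    field_simp
    ring
  · -- uniqueness
    rintro t ⟨ht0, ht1⟩ H
    rw [fGW_closed hp0 hp1 ht0 ht1] at H
    have hs2pos : (0:ℝ) < 2 - p - 2*t*(1-p) := by nlinarith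
    have hargp : (0:ℝ) < p * (2 - p - 2*t*(1-p)) := by positivity
    set s : ℝ := Real.sqrt (p * (2 - p - 2*t*(1-p))) with hs_def
    have hspos : 0 < s := Real.sqrt_pos.2 hargp
    have hsq : s^2 = p * (2 - p - 2*t*(1-p)) := Real.sq_sqrt hargp.le
    have hsne : s ≠ 0 := ne_of_gt hspos
    have hqne : (1:ℝ) - p ≠ 0 := ne_of_gt hq0
    have h1 : s * (p + (1-p)*t) = p := by
      field_simp at H
      linear_combination -H
    clear H
    have h2 : (s * (p + (1-p)*t))^2 = p^2 := by rw [h1]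
    have h3 : p * ((2 - p - 2*t*(1-p)) * (p + (1-p)*t)^2) = p * p := by
      rw [mul_pow, hsq] at h2
      linear_combination h2
    have hcubic : (2 - p - 2*t*(1-p)) * (p + (1-p)*t)^2 = p :=
      mul_left_cancel₀ (ne_of_gt hp0) h3
    have hfact : ((p + (1-p)*t) - 1) * (2*(p + (1-p)*t)^2 - p*(p + (1-p)*t) - p) = 0 := by
      linear_combination -hcubic
    have hu1 : p + (1-p)*t < 1 := by
      have := mul_lt_mul_of_pos_left ht1 hq0
      linarith
    have hquad : 2*(p + (1-p)*t)^2 - p*(p + (1-p)*t) - p = 0 := by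
      rcases mul_eq_zero.1 hfact with h | h
      · exfalso; linarith
      · exact h
    have hfac2 : (4*(p + (1-p)*t) - p - s0) * (4*(p + (1-p)*t) - p + s0) = 0 := by
      linear_combination 8 * hquad - hs0sq
    have hupos : p < p + (1-p)*t := by
      have := mul_pos hq0 ht0
      linarith
    have hpos2 : 0 < 4*(p + (1-p)*t) - p + s0 := by linarith
    have hzero : 4*(p + (1-p)*t) - p - s0 = 0 := by
      rcases mul_eq_zero.1 hfac2 with h | h
      · exact h
      · exfalso; linarith
    rw [hα_def]
    rw [eq_div_iff (by positivity : (4:ℝ) * (1-p) ≠ 0)]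
    linarith
end
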